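/- arXiv:1712.02133 — 14 statements merged into one kernel-verified Lean document; each statement's English description precedes it below -/
import Mathlib

section
/- The exterior algebra over the field with three elements of a three-dimensional vector space is a centrally essential ring that is not commutative. -/
set_option maxHeartbeats 1000000
set_option synthInstance.maxHeartbeats 400000


/-- A ring is *centrally essential* if, as a module over its center, it is an
essential extension of its center. -/
def IsCentrallyEssential (R : Type*) [Ring R] : Prop :=
  ∀ r : R, r ≠ 0 → ∃ c ∈ Subring.center R, c * r ≠ 0 ∧ c * r ∈ Subring.center R

namespace CEaux

open ExteriorAlgebra DirectSum

abbrev K := ZMod 3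
abbrev MM := Fin 3 → ZMod 3
abbrev E := ExteriorAlgebra K MM

noncomputable def e (i : Fin 3) : MM := Pi.single i 1

lemma not_li {n : ℕ} (hn : 4 ≤ n) (v : Fin n → MM) : ¬ LinearIndependent K v := fun h => by
  have h1 := h.fintype_card_le_finrank
  rw [Module.finrank_fin_fun] at h1
  simp at h1
  omega

lemma ιMulti_zero {n : ℕ} (hn : 4 ≤ n) (v : Fin n → MM) : ιMulti K n v = 0 :=
  AlternatingMap.map_linearDependent _ v (not_li hn v)

lemma quad (a b u w : MM) : ι K a * ι K b * (ι K u * ι K w) = 0 := by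
  have h := ιMulti_zero (le_refl 4) ![a, b, u, w]
  rw [ιMulti_apply] at h
  simp [List.ofFn_succ] at h
  simpa [mul_assoc] using h

lemma swap (x y : MM) : ι K x * ι K y = -(ι K y * ι K x) :=
  eq_neg_of_add_eq_zero_left (ι_add_mul_swap x y)

lemma tripA (a b : MM) : ι K a * ι K b * ι K a = 0 := by
  rw [mul_assoc, swap b a, mul_neg, ← mul_assoc, ι_sq_zero, zero_mul, neg_zero]

lemma tripB (a b : MM) : ι K a * ι K b * ι K b = 0 := by
  rw [mul_assoc, ι_sq_zero, mul_zero]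

lemma mem_center_of {x : E} (h : ∀ m, ι K m * x = x * ι K m) : x ∈ Subring.center E := by
  rw [Subring.mem_center_iff]
  intro g
  induction g using ExteriorAlgebra.induction with
  | algebraMap r => exact Algebra.commutes r x
  | ι m => exact h m
  | mul a b ha hb => rw [mul_assoc, hb, ← mul_assoc, ha, mul_assoc]
  | add a b ha hb => rw [add_mul, mul_add, ha, hb]

lemma algebraMap_center (a : K) : algebraMap K E a ∈ Subring.center E :=
  Subring.mem_center_iff.mpr fun g => (Algebra.commutes a g).symm

lemma grade2_eq : (⋀[K]^2 MM : Submodule K E)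
    = LinearMap.range (ι K (M := MM)) * LinearMap.range (ι K (M := MM)) := sq _

lemma central2 {x : E} (hx : x ∈ ⋀[K]^2 MM) : x ∈ Subring.center E := by
  rw [grade2_eq] at hx
  refine Submodule.mul_induction_on hx ?_ ?_
  · rintro _ ⟨a, rfl⟩ _ ⟨b, rfl⟩
    apply mem_center_of
    intro m
    rw [← mul_assoc, swap m a, neg_mul, mul_assoc, swap m b, mul_neg, neg_neg, ← mul_assoc]
  · intro y z hy hz
    exact Subring.add_mem _ hy hz

lemma sq_mul_sq {x y : E} (hx : x ∈ ⋀[K]^2 MM) (hy : y ∈ ⋀[K]^2 MM) : x * y = 0 := by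
  rw [grade2_eq] at hx hy
  refine Submodule.mul_induction_on hx ?_ ?_
  · rintro _ ⟨a, rfl⟩ _ ⟨b, rfl⟩
    refine Submodule.mul_induction_on hy ?_ ?_
    · rintro _ ⟨u, rfl⟩ _ ⟨w, rfl⟩
      exact quad a b u w
    · intro p q hp hq
      rw [mul_add, hp, hq, add_zero]
  · intro p q hp hq
    rw [add_mul, hp, hq, add_zero]

lemma grade3_left {x : E} (hx : x ∈ ⋀[K]^3 MM) (m : MM) : ι K m * x = 0 := by
  have hx' : x ∈ LinearMap.range (ι K (M := MM)) *
      (LinearMap.range (ι K (M := MM))) ^ 2 := by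
    rw [← pow_succ']; exact hx
  revert m
  refine Submodule.mul_induction_on hx' ?_ ?_
  · rintro _ ⟨a, rfl⟩ y hy m
    rw [← mul_assoc]
    have h2 : ι K m * ι K a ∈ ⋀[K]^2 MM := by
      rw [grade2_eq]
      exact Submodule.mul_mem_mul (LinearMap.mem_range_self _ m) (LinearMap.mem_range_self _ a)
    exact sq_mul_sq h2 hy
  · intro p q hp hq m
    rw [mul_add, hp, hq, add_zero]

lemma grade3_right {x : E} (hx : x ∈ ⋀[K]^3 MM) (m : MM) : x * ι K m = 0 := by
  have hx' : x ∈ (LinearMap.range (ι K (M := MM))) ^ 2 *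
      LinearMap.range (ι K (M := MM)) := by
    rw [← pow_succ]; exact hx
  revert m
  refine Submodule.mul_induction_on hx' ?_ ?_
  · rintro y hy _ ⟨a, rfl⟩ m
    rw [mul_assoc]
    have h2 : ι K a * ι K m ∈ ⋀[K]^2 MM := by
      rw [grade2_eq]
      exact Submodule.mul_mem_mul (LinearMap.mem_range_self _ a) (LinearMap.mem_range_self _ m)
    exact sq_mul_sq hy h2
  · intro p q hp hq m
    rw [add_mul, hp, hq, add_zero]

lemma central3 {x : E} (hx : x ∈ ⋀[K]^3 MM) : x ∈ Subring.center E :=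
  mem_center_of fun m => by rw [grade3_left hx m, grade3_right hx m]

lemma central0 {x : E} (hx : x ∈ ⋀[K]^0 MM) : x ∈ Subring.center E := by
  rw [show (⋀[K]^0 MM : Submodule K E) = 1 from pow_zero _, Submodule.mem_one] at hx
  obtain ⟨a, rfl⟩ := hx
  exact algebraMap_center a

noncomputable def f : ∀ n : ℕ, MM [⋀^Fin n]→ₗ[K] K := fun n =>
  match n with
  | 3 => Matrix.detRowAlternating
  | _ => 0

noncomputable def Λ : E →ₗ[K] K := liftAlternating f

lemma ιMulti2 (a b : MM) : ιMulti K 2 ![a, b] = ι K a * ι K b := by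
  rw [ιMulti_apply]
  simp [List.ofFn_succ]

lemma ιMulti3 (a b c : MM) : ιMulti K 3 ![a, b, c] = ι K a * ι K b * ι K c := by
  rw [ιMulti_apply]
  simp [List.ofFn_succ, mul_assoc]

lemma Λ_two (a b : MM) : Λ (ι K a * ι K b) = 0 := by
  rw [← ιMulti2, Λ, liftAlternating_apply_ιMulti]
  rfl

lemma Λ_three (a b c : MM) : Λ (ι K a * ι K b * ι K c) = (Matrix.of ![a, b, c]).det := by
  rw [← ιMulti3, Λ, liftAlternating_apply_ιMulti]
  rfl

noncomputable abbrev 𝒜 : ℕ → Submodule K E := fun i => ⋀[K]^i MM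

lemma grade_bot {n : ℕ} (hn : 4 ≤ n) : (⋀[K]^n MM : Submodule K E) = ⊥ := by
  rw [← ιMulti_span_fixedDegree, Submodule.span_eq_bot]
  rintro x ⟨v, rfl⟩
  exact ιMulti_zero hn v

lemma decompose_eq (r : E) :
    r = (decompose 𝒜 r 0 : E) + (decompose 𝒜 r 1 : E) + (decompose 𝒜 r 2 : E)
      + (decompose 𝒜 r 3 : E) := by
  classical
  have hsub : DFinsupp.support (decompose 𝒜 r) ⊆ Finset.range 4 := by
    intro i hi
    by_contra hlt
    rw [Finset.mem_range, not_lt] at hlt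
    have : (decompose 𝒜 r i : E) ∈ (⊥ : Submodule K E) := by
      rw [← grade_bot hlt]; exact SetLike.coe_mem _
    rw [Submodule.mem_bot] at this
    exact (DFinsupp.mem_support_iff.mp hi) (Subtype.ext this)
  have hzero : ∀ i ∈ Finset.range 4, i ∉ DFinsupp.support (decompose 𝒜 r) →
      (decompose 𝒜 r i : E) = 0 := by
    intro i _ hi
    rw [DFinsupp.notMem_support_iff.mp hi, ZeroMemClass.coe_zero]
  calc r = ∑ i ∈ DFinsupp.support (decompose 𝒜 r), (decompose 𝒜 r i : E) :=
        (DirectSum.sum_support_decompose 𝒜 r).symm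
    _ = ∑ i ∈ Finset.range 4, (decompose 𝒜 r i : E) := Finset.sum_subset hsub hzero
    _ = _ := by
        rw [Finset.sum_range_succ, Finset.sum_range_succ, Finset.sum_range_succ,
          Finset.sum_range_one]

lemma key (i j k : Fin 3) (hij : i ≠ j) (hik : i ≠ k) (hjk : j ≠ k)
    (hcov : ∀ x : Fin 3, x = i ∨ x = j ∨ x = k)
    (hdet : (Matrix.of ![e i, e j, e k]).det ≠ 0)
    (v : MM) (hv : v k ≠ 0)
    {x0 x2 x3 : E} (h0 : x0 ∈ ⋀[K]^0 MM) (h2 : x2 ∈ ⋀[K]^2 MM) (h3 : x3 ∈ ⋀[K]^3 MM) :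
    ∃ c ∈ Subring.center E,
      c * (x0 + ι K v + x2 + x3) ≠ 0 ∧ c * (x0 + ι K v + x2 + x3) ∈ Subring.center E := by
  have h0' : x0 ∈ (1 : Submodule K E) := by
    rw [← pow_zero (LinearMap.range (ι K (M := MM)))]; exact h0
  obtain ⟨a, ha⟩ := Submodule.mem_one.mp h0'
  have hc2 : ι K (e i) * ι K (e j) ∈ ⋀[K]^2 MM := by
    rw [grade2_eq]
    exact Submodule.mul_mem_mul (LinearMap.mem_range_self _ _) (LinearMap.mem_range_self _ _)
  have hvdec : v = v i • e i + v j • e j + v k • e k := by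
    funext x
    rcases hcov x with rfl | rfl | rfl <;>
      simp [e, Pi.single_apply, hij, hik, hjk, Ne.symm hij, Ne.symm hik, Ne.symm hjk]
  have hcv : ι K (e i) * ι K (e j) * ι K v
      = v k • (ι K (e i) * ι K (e j) * ι K (e k)) := by
    conv_lhs => rw [hvdec]
    rw [map_add, map_add, map_smul, map_smul, map_smul, mul_add, mul_add,
      mul_smul_comm, mul_smul_comm, mul_smul_comm, tripA, tripB, smul_zero, smul_zero,
      zero_add, zero_add]
  have hcx2 : ι K (e i) * ι K (e j) * x2 = 0 := sq_mul_sq hc2 h2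
  have hcx3 : ι K (e i) * ι K (e j) * x3 = 0 := by
    rw [mul_assoc, grade3_left h3, mul_zero]
  have h3T : ι K (e i) * ι K (e j) * ι K (e k) ∈ ⋀[K]^3 MM := by
    rw [show (⋀[K]^3 MM : Submodule K E)
        = ⋀[K]^2 MM * LinearMap.range (ι K (M := MM)) from pow_succ _ 2]
    exact Submodule.mul_mem_mul hc2 (LinearMap.mem_range_self _ _)
  have hcr : ι K (e i) * ι K (e j) * (x0 + ι K v + x2 + x3)
      = a • (ι K (e i) * ι K (e j)) + v k • (ι K (e i) * ι K (e j) * ι K (e k)) := by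
    rw [mul_add, mul_add, mul_add, hcx2, hcx3, add_zero, add_zero, hcv, ← ha,
      show ι K (e i) * ι K (e j) * algebraMap K E a = a • (ι K (e i) * ι K (e j)) from by
        rw [← Algebra.commutes, Algebra.smul_def]]
  refine ⟨ι K (e i) * ι K (e j), central2 hc2, ?_, ?_⟩
  · intro hzero
    have hΛ : Λ (ι K (e i) * ι K (e j) * (x0 + ι K v + x2 + x3))
        = v k * (Matrix.of ![e i, e j, e k]).det := by
      rw [hcr, map_add, map_smul, map_smul, Λ_two, smul_zero, zero_add, Λ_three, smul_eq_mul]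
    rw [hzero, map_zero] at hΛ
    exact mul_ne_zero hv hdet hΛ.symm
  · rw [hcr]
    refine Subring.add_mem _ ?_ ?_
    · rw [Algebra.smul_def]
      exact Subring.mul_mem _ (algebraMap_center a) (central2 hc2)
    · rw [Algebra.smul_def]
      exact Subring.mul_mem _ (algebraMap_center _) (central3 h3T)

lemma det_120 : (Matrix.of ![e 1, e 2, e 0]).det ≠ 0 := by
  simp [Matrix.det_fin_three, e, Pi.single_apply]

lemma det_021 : (Matrix.of ![e 0, e 2, e 1]).det ≠ 0 := by
  simp [Matrix.det_fin_three, e, Pi.single_apply]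

lemma det_012 : (Matrix.of ![e 0, e 1, e 2]).det ≠ 0 := by
  simp [Matrix.det_fin_three, e, Pi.single_apply]

end CEaux

open CEaux ExteriorAlgebra DirectSum

theorem exteriorAlgebra_zmod3_centrallyEssential_not_comm :
    IsCentrallyEssential (ExteriorAlgebra (ZMod 3) (Fin 3 → ZMod 3)) ∧
      ∃ a b : ExteriorAlgebra (ZMod 3) (Fin 3 → ZMod 3), a * b ≠ b * a := by
  constructor
  · intro r hr
    classical
    by_cases h1 : (decompose 𝒜 r 1 : E) = 0
    · refine ⟨1, Subring.one_mem _, by simpa using hr, ?_⟩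
      rw [one_mul, decompose_eq r, h1, add_zero]
      exact Subring.add_mem _
        (Subring.add_mem _ (central0 (SetLike.coe_mem _)) (central2 (SetLike.coe_mem _)))
        (central3 (SetLike.coe_mem _))
    · have hmem : (decompose 𝒜 r 1 : E) ∈ LinearMap.range (ι K (M := MM)) := by
        rw [← pow_one (LinearMap.range (ι K (M := MM)))]
        exact SetLike.coe_mem _
      obtain ⟨v, hv⟩ := hmem
      have hvne : v ≠ 0 := fun h => h1 (by rw [← hv, h, map_zero])
      obtain ⟨k, hk⟩ := Function.ne_iff.mp hvne
      have hreq : r = (decompose 𝒜 r 0 : E) + ι K v + (decompose 𝒜 r 2 : E)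
          + (decompose 𝒜 r 3 : E) := by
        rw [hv]; exact decompose_eq r
      rw [hreq]
      fin_cases k
      · exact key 1 2 0 (by decide) (by decide) (by decide) (by decide) det_120 v
          (by simpa using hk) (SetLike.coe_mem _) (SetLike.coe_mem _) (SetLike.coe_mem _)
      · exact key 0 2 1 (by decide) (by decide) (by decide) (by decide) det_021 v
          (by simpa using hk) (SetLike.coe_mem _) (SetLike.coe_mem _) (SetLike.coe_mem _)
      · exact key 0 1 2 (by decide) (by decide) (by decide) (by decide) det_012 v
          (by simpa using hk) (SetLike.coe_mem _) (SetLike.coe_mem _) (SetLike.coe_mem _)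
  · refine ⟨ι K (e 0), ι K (e 1), fun h => ?_⟩
    have hsw := swap (e 0) (e 1)
    rw [← h] at hsw
    have hTT : ι K (e 0) * ι K (e 1) + ι K (e 0) * ι K (e 1) = 0 := by
      nth_rewrite 1 [hsw]
      exact neg_add_cancel _
    have h3T : ι K (e 0) * ι K (e 1) = 0 := by
      have h30 : ((1 : K) + 1 + 1) • (ι K (e 0) * ι K (e 1)) = 0 := by
        rw [show ((1 : K) + 1 + 1) = 0 from by decide, zero_smul]
      rw [add_smul, add_smul, one_smul, hTT, zero_add] at h30
      exact h30
    have hzero : ι K (e 0) * ι K (e 1) * ι K (e 2) = 0 := by rw [h3T, zero_mul]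
    apply det_012
    rw [← Λ_three, hzero, map_zero]
end

section
/- Let R = ⊕_{n∈ℕ} R_n be a graded, generalized anticommutative, homogeneously faithful ring with no additive 2-torsion. If there exists an odd positive integer n with R_n ≠ 0 and R_{n+1} = 0, then C(R) = R_{(0)} + R_n, where R_{(0)} = ⊕_k R_{2k} is the even part; otherwise C(R) = R_{(0)}. -/
section Aux

variable {R : Type*} [Ring R] (𝒜 : ℕ → AddSubgroup R) [GradedRing 𝒜]

omit [GradedRing 𝒜] in
lemma aux_ne_bot_iff {k : ℕ} : 𝒜 k ≠ ⊥ ↔ ∃ x ∈ 𝒜 k, x ≠ 0 := by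
  rw [Ne, AddSubgroup.eq_bot_iff_forall]
  push_neg
  rfl

lemma aux_central (x : R) (h : ∀ (k : ℕ) (y : R), y ∈ 𝒜 k → x * y = y * x) :
    x ∈ Subring.center R := by
  classical
  rw [Subring.mem_center_iff]
  intro g
  conv_lhs => rw [← DirectSum.sum_support_decompose 𝒜 g]
  conv_rhs => rw [← DirectSum.sum_support_decompose 𝒜 g]
  rw [Finset.sum_mul, Finset.mul_sum]
  exact Finset.sum_congr rfl fun k _ => (h k _ (SetLike.coe_mem _)).symm

lemma aux_component_central {x : R} (hx : x ∈ Subring.center R) (m : ℕ) :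
    ((DirectSum.decompose 𝒜 x m : 𝒜 m) : R) ∈ Subring.center R := by
  apply aux_central 𝒜
  intro k y hy
  have hxy : x * y = y * x := (Subring.mem_center_iff.mp hx y).symm
  have h1 : (DirectSum.decompose 𝒜 (x * y) (m + k) : R)
      = (DirectSum.decompose 𝒜 x ((m + k) - k) : R) * y :=
    DirectSum.coe_decompose_mul_of_right_mem_of_le 𝒜 hy (Nat.le_add_left k m)
  have h2 : (DirectSum.decompose 𝒜 (y * x) (m + k) : R)
      = y * (DirectSum.decompose 𝒜 x ((m + k) - k) : R) :=
    DirectSum.coe_decompose_mul_of_left_mem_of_le 𝒜 hy (Nat.le_add_left k m)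
  have : (m + k) - k = m := by omega
  rw [this] at h1 h2
  rw [← h1, ← h2, hxy]

end Aux

/-- For a graded, generalized anticommutative, homogeneously faithful ring
without additive 2-torsion: if there is an odd `n` with `R_n ≠ 0` and
`R_{n+1} = 0`, then the center is `R_(0) + R_n` (an element is central iff all
of its odd homogeneous components of degree `≠ n` vanish); otherwise the center
is the even part `R_(0)`. -/
theorem center_of_generalized_anticommutative_graded_ring (R : Type*) [Ring R]
    (𝒜 : ℕ → AddSubgroup R) [GradedRing 𝒜]
    (hanti : ∀ (m n : ℕ) (x y : R), x ∈ 𝒜 m → y ∈ 𝒜 n →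
      y * x = (-1 : R) ^ (m * n) * (x * y))
    (hfaith : ∀ m n : ℕ, 𝒜 (m + n) ≠ ⊥ →
      𝒜 m ≠ ⊥ ∧ ∀ x ∈ 𝒜 m, x ≠ 0 → ∃ y ∈ 𝒜 n, x * y ≠ 0)
    (h2 : ∀ x : R, 2 * x = 0 → x = 0) :
    (∀ n : ℕ, Odd n → 𝒜 n ≠ ⊥ → 𝒜 (n + 1) = ⊥ →
      ∀ x : R, x ∈ Subring.center R ↔
        ∀ k : ℕ, Odd k → k ≠ n → (DirectSum.decompose 𝒜 x k : R) = 0) ∧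
    ((¬ ∃ n : ℕ, Odd n ∧ 𝒜 n ≠ ⊥ ∧ 𝒜 (n + 1) = ⊥) →
      ∀ x : R, x ∈ Subring.center R ↔
        ∀ k : ℕ, Odd k → (DirectSum.decompose 𝒜 x k : R) = 0) := by
  classical
  -- even homogeneous elements are central
  have heven : ∀ (m : ℕ), Even m → ∀ x ∈ 𝒜 m, x ∈ Subring.center R := by
    intro m hm x hx
    apply aux_central 𝒜
    intro k y hy
    have := hanti m k x y hx hy
    rw [Even.neg_one_pow (hm.mul_right k), one_mul] at this
    exact this.symm
  -- a central homogeneous element of odd degree multiplied by an odd-degree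
  -- element gives zero
  have hkill : ∀ (m k : ℕ), Odd m → Odd k → ∀ x ∈ 𝒜 m, x ∈ Subring.center R →
      ∀ y ∈ 𝒜 k, x * y = 0 := by
    intro m k hm hk x hx hxc y hy
    have h1 : y * x = x * y := Subring.mem_center_iff.mp hxc y
    have h3 : y * x = -(x * y) := by
      have := hanti m k x y hx hy
      rwa [Odd.neg_one_pow (hm.mul hk), neg_one_mul] at this
    apply h2
    rw [two_mul]
    nth_rewrite 1 [← h1]
    rw [h3, neg_add_cancel]
  -- a nonzero central homogeneous element of odd degree forces 𝒜 (m+1) = ⊥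
  have hodd : ∀ (m : ℕ), Odd m → ∀ x ∈ 𝒜 m, x ∈ Subring.center R → x ≠ 0 →
      𝒜 (m + 1) = ⊥ := by
    intro m hm x hx hxc hx0
    by_contra hne
    obtain ⟨y, hy, hxy⟩ := (hfaith m 1 hne).2 x hx hx0
    exact hxy (hkill m 1 hm (by norm_num) x hx hxc y hy)
  constructor
  · intro n hn hnbot hntop x
    -- 𝒜 k = ⊥ for k > n
    have htop : ∀ k, n < k → 𝒜 k = ⊥ := by
      intro k hk
      by_contra hne
      have : 𝒜 ((n + 1) + (k - (n + 1))) ≠ ⊥ := by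
        rwa [Nat.add_sub_cancel' hk]
      exact (hfaith (n + 1) (k - (n + 1)) this).1 hntop
    constructor
    · intro hx k hk hkn
      by_contra hc0
      set c : R := (DirectSum.decompose 𝒜 x k : R) with hc
      have hcmem : c ∈ 𝒜 k := SetLike.coe_mem _
      have hcc : c ∈ Subring.center R := aux_component_central 𝒜 hx k
      rcases lt_or_gt_of_ne hkn with hlt | hgt
      · -- k < n : 𝒜 (k+1) ≠ ⊥, contradiction with hodd
        have h1 : 𝒜 (k + 1) ≠ ⊥ := by
          have : 𝒜 ((k + 1) + (n - (k + 1))) ≠ ⊥ := by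
            rwa [Nat.add_sub_cancel' hlt]
          exact (hfaith (k + 1) (n - (k + 1)) this).1
        exact h1 (hodd k hk c hcmem hcc hc0)
      · -- k > n : 𝒜 k = ⊥
        have := htop k hgt
        rw [this] at hcmem
        exact hc0 (AddSubgroup.mem_bot.mp hcmem)
    · intro h
      rw [← DirectSum.sum_support_decompose 𝒜 x]
      apply Subring.sum_mem
      intro k hk
      by_cases hkodd : Odd k
      · by_cases hkn : k = n
        · -- degree n component is central
          subst hkn
          apply aux_central 𝒜
          intro j y hy
          by_cases hj : Odd j
          · have hmem : (DirectSum.decompose 𝒜 x k : R) * y ∈ 𝒜 (k + j) :=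
              SetLike.mul_mem_graded (SetLike.coe_mem _) hy
            have hz : 𝒜 (k + j) = ⊥ := htop (k + j) (by obtain ⟨t, ht⟩ := hj; omega)
            rw [hz, AddSubgroup.mem_bot] at hmem
            have h3 := hanti k j (DirectSum.decompose 𝒜 x k : R) y
              (SetLike.coe_mem _) hy
            rw [hmem, mul_zero] at h3
            rw [hmem, h3]
          · have hje : Even j := Nat.not_odd_iff_even.mp hj
            have h3 := hanti k j (DirectSum.decompose 𝒜 x k : R) y
              (SetLike.coe_mem _) hy
            rw [Even.neg_one_pow (hje.mul_left k), one_mul] at h3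
            exact h3.symm
        · rw [h k hkodd hkn]
          exact Subring.zero_mem _
      · exact heven k (Nat.not_odd_iff_even.mp hkodd) _ (SetLike.coe_mem _)
  · intro hno x
    constructor
    · intro hx k hk
      by_contra hc0
      set c : R := (DirectSum.decompose 𝒜 x k : R) with hc
      have hcmem : c ∈ 𝒜 k := SetLike.coe_mem _
      have hcc : c ∈ Subring.center R := aux_component_central 𝒜 hx k
      have hbot := hodd k hk c hcmem hcc hc0
      exact hno ⟨k, hk, (aux_ne_bot_iff 𝒜).mpr ⟨c, hcmem, hc0⟩, hbot⟩
    · intro h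
      rw [← DirectSum.sum_support_decompose 𝒜 x]
      apply Subring.sum_mem
      intro k hk
      by_cases hkodd : Odd k
      · rw [h k hkodd]; exact Subring.zero_mem _
      · exact heven k (Nat.not_odd_iff_even.mp hkodd) _ (SetLike.coe_mem _)
end

section
/- Let R = ⊕_{n∈ℕ} R_n be a graded, generalized anticommutative, homogeneously faithful ring with no additive 2-torsion. Then R is centrally essential if and only if either R = R_0 or there exists an odd positive integer n such that R_n ≠ 0 and R_{n+1} = 0. -/
section Aux

open DirectSum

variable {R : Type*} [Ring R] (𝒜 : ℕ → AddSubgroup R) [GradedRing 𝒜]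

/-- An element commuting with all homogeneous elements is central. -/
lemma aux_mem_center_of_homog_comm {x : R}
    (h : ∀ (k : ℕ) (y : R), y ∈ 𝒜 k → y * x = x * y) : x ∈ Subring.center R := by
  classical
  rw [Subring.mem_center_iff]
  intro g
  conv_lhs => rw [← DirectSum.sum_support_decompose 𝒜 g]
  conv_rhs => rw [← DirectSum.sum_support_decompose 𝒜 g]
  rw [Finset.sum_mul, Finset.mul_sum]
  exact Finset.sum_congr rfl fun k _ => h k _ (SetLike.coe_mem _)

/-- Even-degree homogeneous elements are central. -/
lemma aux_even_central
    (hanti : ∀ (m n : ℕ) (x y : R), x ∈ 𝒜 m → y ∈ 𝒜 n →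
      y * x = (-1 : R) ^ (m * n) * (x * y))
    {m : ℕ} (hm : Even m) {x : R} (hx : x ∈ 𝒜 m) : x ∈ Subring.center R := by
  apply aux_mem_center_of_homog_comm 𝒜
  intro k y hy
  rw [hanti m k x y hx hy, Even.neg_one_pow (hm.mul_right k), one_mul]

/-- Top-degree homogeneous elements are central. -/
lemma aux_top_central
    (hanti : ∀ (m n : ℕ) (x y : R), x ∈ 𝒜 m → y ∈ 𝒜 n →
      y * x = (-1 : R) ^ (m * n) * (x * y))
    {m : ℕ} (htop : ∀ k, m < k → 𝒜 k = ⊥) {x : R} (hx : x ∈ 𝒜 m) :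
    x ∈ Subring.center R := by
  apply aux_mem_center_of_homog_comm 𝒜
  intro k y hy
  rcases Nat.eq_zero_or_pos k with rfl | hk
  · rw [hanti m 0 x y hx hy]
    simp
  · have hxy : x * y = 0 := by
      have hmem : x * y ∈ 𝒜 (m + k) := SetLike.mul_mem_graded hx hy
      rw [htop (m + k) (by omega)] at hmem
      exact (AddSubgroup.mem_bot).mp hmem
    rw [hanti m k x y hx hy, hxy, mul_zero]

/-- Components of a central element are central. -/
lemma aux_component_central_s6 {c : R} (hc : c ∈ Subring.center R) (j : ℕ) :
    (DirectSum.decompose 𝒜 c j : R) ∈ Subring.center R := by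
  apply aux_mem_center_of_homog_comm 𝒜
  intro k y hy
  have h1 : (DirectSum.decompose 𝒜 (c * y) (j + k) : R)
      = (DirectSum.decompose 𝒜 c j : R) * y :=
    DirectSum.coe_decompose_mul_add_of_right_mem 𝒜 hy
  have h2 : (DirectSum.decompose 𝒜 (y * c) (k + j) : R)
      = y * (DirectSum.decompose 𝒜 c j : R) :=
    DirectSum.coe_decompose_mul_add_of_left_mem 𝒜 hy
  rw [← h1, ← h2, Subring.mem_center_iff.mp hc y, Nat.add_comm k j]

/-- An odd-degree central homogeneous element is `0` if the next degree is nonzero. -/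
lemma aux_odd_central_eq_zero
    (hanti : ∀ (m n : ℕ) (x y : R), x ∈ 𝒜 m → y ∈ 𝒜 n →
      y * x = (-1 : R) ^ (m * n) * (x * y))
    (hfaith : ∀ m n : ℕ, 𝒜 (m + n) ≠ ⊥ →
      𝒜 m ≠ ⊥ ∧ ∀ x ∈ 𝒜 m, x ≠ 0 → ∃ y ∈ 𝒜 n, x * y ≠ 0)
    (h2 : ∀ x : R, 2 * x = 0 → x = 0)
    {d : ℕ} {z : R} (hd : Odd d) (hz : z ∈ 𝒜 d)
    (hzc : z ∈ Subring.center R) (hne : 𝒜 (d + 1) ≠ ⊥) : z = 0 := by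
  by_contra hz0
  obtain ⟨y, hy, hzy⟩ := (hfaith d 1 hne).2 z hz hz0
  have h1' : y * z = -(z * y) := by
    rw [hanti d 1 z y hz hy, Odd.neg_one_pow (by simpa using hd), neg_one_mul]
  have h2' : y * z = z * y := Subring.mem_center_iff.mp hzc y
  have key : z * y = -(z * y) := h2'.symm.trans h1'
  have hzero : 2 * (z * y) = 0 := by
    rw [two_mul]
    nth_rewrite 1 [key]
    exact neg_add_cancel _
  exact hzy (h2 _ hzero)

end Aux

open DirectSum

/-- A graded, generalized anticommutative, homogeneously faithful ring without
additive 2-torsion is centrally essential iff either `R = R_0` or there is an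
odd `n` with `R_n ≠ 0` and `R_{n+1} = 0`. -/
theorem centrallyEssential_iff_of_generalized_anticommutative (R : Type*) [Ring R]
    (𝒜 : ℕ → AddSubgroup R) [GradedRing 𝒜]
    (hanti : ∀ (m n : ℕ) (x y : R), x ∈ 𝒜 m → y ∈ 𝒜 n →
      y * x = (-1 : R) ^ (m * n) * (x * y))
    (hfaith : ∀ m n : ℕ, 𝒜 (m + n) ≠ ⊥ →
      𝒜 m ≠ ⊥ ∧ ∀ x ∈ 𝒜 m, x ≠ 0 → ∃ y ∈ 𝒜 n, x * y ≠ 0)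
    (h2 : ∀ x : R, 2 * x = 0 → x = 0) :
    IsCentrallyEssential R ↔
      ((∀ x : R, x ∈ 𝒜 0) ∨ ∃ n : ℕ, Odd n ∧ 𝒜 n ≠ ⊥ ∧ 𝒜 (n + 1) = ⊥) := by
  classical
  have hdc : ∀ k l : ℕ, k ≤ l → 𝒜 l ≠ ⊥ → 𝒜 k ≠ ⊥ := by
    intro k l hkl hl
    obtain ⟨e, rfl⟩ := Nat.exists_eq_add_of_le hkl
    exact (hfaith k e hl).1
  constructor
  · -- forward direction
    intro hce
    by_contra hcon
    push_neg at hcon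
    obtain ⟨⟨x0, hx0⟩, hodd⟩ := hcon
    -- 𝒜 1 ≠ ⊥
    have h1ne : 𝒜 1 ≠ ⊥ := by
      intro hb1
      apply hx0
      have hz : ∀ k, k ≠ 0 → (DirectSum.decompose 𝒜 x0 k : R) = 0 := by
        intro k hk
        have hbk : 𝒜 k = ⊥ := by
          by_contra h
          exact hdc 1 k (by omega) h hb1
        exact (AddSubgroup.eq_bot_iff_forall _).mp hbk _ (SetLike.coe_mem _)
      rw [← DirectSum.sum_support_decompose 𝒜 x0]
      apply AddSubgroup.sum_mem
      intro k _
      rcases eq_or_ne k 0 with rfl | hk0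
      · exact (DirectSum.decompose 𝒜 x0 0).2
      · rw [hz k hk0]; exact zero_mem _
    obtain ⟨x, hx1, hxne⟩ : ∃ x ∈ 𝒜 1, x ≠ 0 := by
      by_contra h
      push_neg at h
      exact h1ne ((AddSubgroup.eq_bot_iff_forall _).mpr h)
    obtain ⟨c, hcC, hcx, hcxC⟩ := hce x hxne
    apply hcx
    have key : ∀ j : ℕ, (DirectSum.decompose 𝒜 c j : R) * x = 0 := by
      intro j
      rcases Nat.even_or_odd j with hj | hj
      · -- j even: c_j * x is a central element of odd degree j+1
        set z := (DirectSum.decompose 𝒜 c j : R) * x with hzdef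
        have hzmem : z ∈ 𝒜 (j + 1) :=
          SetLike.mul_mem_graded (DirectSum.decompose 𝒜 c j).2 hx1
        have hzc : z ∈ Subring.center R := by
          have heq : (DirectSum.decompose 𝒜 (c * x) (j + 1) : R) = z :=
            DirectSum.coe_decompose_mul_add_of_right_mem 𝒜 hx1
          rw [← heq]
          exact aux_component_central_s6 𝒜 hcxC (j + 1)
        by_contra hz0
        have hne : 𝒜 (j + 1) ≠ ⊥ := by
          intro hb
          rw [hb] at hzmem
          exact hz0 ((AddSubgroup.mem_bot).mp hzmem)
        have hne2 : 𝒜 (j + 1 + 1) ≠ ⊥ := hodd (j + 1) (Even.add_one hj) hne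
        exact hz0 (aux_odd_central_eq_zero 𝒜 hanti hfaith h2
          (Even.add_one hj) hzmem hzc hne2)
      · -- j odd: c_j is a central element of odd degree j
        have hcj : (DirectSum.decompose 𝒜 c j : R) ∈ Subring.center R :=
          aux_component_central_s6 𝒜 hcC j
        have hcj0 : (DirectSum.decompose 𝒜 c j : R) = 0 := by
          by_contra h
          have hne : 𝒜 j ≠ ⊥ := by
            intro hb
            exact h ((AddSubgroup.eq_bot_iff_forall _).mp hb _ (SetLike.coe_mem _))
          exact h (aux_odd_central_eq_zero 𝒜 hanti hfaith h2 hj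
            (DirectSum.decompose 𝒜 c j).2 hcj (hodd j hj hne))
        rw [hcj0, zero_mul]
    conv_lhs => rw [← DirectSum.sum_support_decompose 𝒜 c]
    rw [Finset.sum_mul]
    exact Finset.sum_eq_zero fun j _ => key j
  · -- backward direction
    rintro (h0 | ⟨n, hn, hne, hbot⟩)
    · intro r hr
      refine ⟨1, Subring.one_mem _, by simpa using hr, ?_⟩
      rw [one_mul]
      exact aux_even_central 𝒜 hanti Even.zero (h0 r)
    · have hbots : ∀ k, n < k → 𝒜 k = ⊥ := by
        intro k hk
        by_contra h
        exact hdc (n + 1) k (by omega) h hbot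
      intro r hr
      have hsupp : (DirectSum.decompose 𝒜 r).support.Nonempty := by
        rw [Finset.nonempty_iff_ne_empty]
        intro h
        apply hr
        rw [← DirectSum.sum_support_decompose 𝒜 r, h, Finset.sum_empty]
      set m := (DirectSum.decompose 𝒜 r).support.min' hsupp with hmdef
      have hm_mem : m ∈ (DirectSum.decompose 𝒜 r).support := Finset.min'_mem _ _
      have hrm : (DirectSum.decompose 𝒜 r m : R) ≠ 0 := by
        intro h
        exact DFinsupp.mem_support_iff.mp hm_mem (Subtype.ext h)
      have hmn : m ≤ n := by
        by_contra h
        push_neg at h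
        exact hrm ((AddSubgroup.eq_bot_iff_forall _).mp (hbots m h) _ (SetLike.coe_mem _))
      obtain ⟨d, hd_even, hd1, hd2⟩ : ∃ d, Even d ∧ n - 1 ≤ m + d ∧ m + d ≤ n := by
        obtain ⟨a, ha⟩ := hn
        rcases Nat.even_or_odd m with ⟨b, hb⟩ | ⟨b, hb⟩
        · exact ⟨2 * (a - b), ⟨a - b, by omega⟩, by omega, by omega⟩
        · exact ⟨2 * (a - b), ⟨a - b, by omega⟩, by omega, by omega⟩
      have hmd_ne : 𝒜 (m + d) ≠ ⊥ := hdc (m + d) n hd2 hne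
      obtain ⟨y, hy, hry⟩ := (hfaith m d hmd_ne).2 _ (DirectSum.decompose 𝒜 r m).2 hrm
      have hyC : y ∈ Subring.center R := aux_even_central 𝒜 hanti hd_even hy
      have hyrm : y * (DirectSum.decompose 𝒜 r m : R) ≠ 0 := by
        rw [hanti m d _ y (SetLike.coe_mem _) hy,
          Even.neg_one_pow (hd_even.mul_left m), one_mul]
        exact hry
      have hcr_ne : y * r ≠ 0 := by
        intro h
        apply hyrm
        have heq : (DirectSum.decompose 𝒜 (y * r) (d + m) : R)
            = y * (DirectSum.decompose 𝒜 r m : R) :=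
          DirectSum.coe_decompose_mul_add_of_left_mem 𝒜 hy
        rw [← heq, h]
        simp
      have hcrC : y * r ∈ Subring.center R := by
        have hsum : y * r = ∑ k ∈ (DirectSum.decompose 𝒜 r).support,
            y * (DirectSum.decompose 𝒜 r k : R) := by
          conv_lhs => rw [← DirectSum.sum_support_decompose 𝒜 r]
          rw [Finset.mul_sum]
        rw [hsum]
        apply Subring.sum_mem
        intro k hk
        have hmem : y * (DirectSum.decompose 𝒜 r k : R) ∈ 𝒜 (d + k) :=
          SetLike.mul_mem_graded hy (SetLike.coe_mem _)
        have hkm : m ≤ k := Finset.min'_le _ _ hk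
        rcases lt_trichotomy (d + k) n with h | h | h
        · have heven : Even (d + k) := by
            obtain ⟨a, ha⟩ := hn
            exact ⟨a, by omega⟩
          exact aux_even_central 𝒜 hanti heven hmem
        · exact aux_top_central 𝒜 hanti hbots (h ▸ hmem)
        · have hzz : y * (DirectSum.decompose 𝒜 r k : R) = 0 := by
            rw [hbots _ h] at hmem
            exact (AddSubgroup.mem_bot).mp hmem
          rw [hzz]
          exact Subring.zero_mem _
      exact ⟨y, hyC, hcr_ne, hcrC⟩
end

section
/- If V is a vector space of odd dimension at least 3 over a finite field of odd characteristic, then the exterior algebra Λ(V) is a finite, noncommutative, centrally essential ring. -/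
/-!
Let `n = dim V` be odd and `e_S` the monomial basis of `Λ(V)`. Since `v * x = (-1)^k x * v` for
`v ∈ V` and `x` of degree `k`, even-degree elements are central; so are those of degree `n`,
which `V` annihilates from both sides. Hence everything of degree `≥ n - 1` is central.
Given `r ≠ 0`, take `S₀` of least size with a nonzero `e_{S₀}`-coefficient `c`, and `U ⊆ S₀ᶜ`
of even size missing at most one point of `S₀ᶜ`. Then `e_U` is central, `e_U r` has degree
`≥ n - 1`, so is central, and `e_U r ≠ 0` because `e_{S₀ᶜ} r = ± c e_{univ}`: every other
`S` in the support meets `S₀ᶜ`. Noncommutativity is `x ∧ y = -(y ∧ x) ≠ 0` with `2 ≠ 0`.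
-/

open ExteriorAlgebra Module

theorem Finset.exists_subset_even_card_add_one_ge {α : Type*} (T : Finset α) :
    ∃ U ⊆ T, Even U.card ∧ T.card ≤ U.card + 1 := by
  obtain ⟨U, hUT, hU⟩ := Finset.exists_subset_card_eq (Nat.mul_div_le T.card 2)
  exact ⟨U, hUT, hU ▸ even_two_mul _, by omega⟩

namespace ExteriorAlgebra

section CommRing

variable {R M : Type*} [CommRing R] [AddCommGroup M] [Module R M]

theorem ι_mem_exteriorPower_one (v : M) : ι R v ∈ ⋀[R]^1 M := by
  rw [exteriorPower, pow_one]
  exact LinearMap.mem_range_self _ v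

theorem ι_mul_ιMulti (v : M) {k : ℕ} (w : Fin k → M) :
    ι R v * ιMulti R k w = (-1 : R) ^ k • (ιMulti R k w * ι R v) := by
  induction k with
  | zero => simp
  | succ k ih =>
    have hswap : ι R v * ι R (w 0) = -(ι R (w 0) * ι R v) :=
      eq_neg_of_add_eq_zero_left (ι_add_mul_swap _ _)
    rw [ιMulti_succ_apply, ← mul_assoc, hswap, neg_mul, mul_assoc, ih, pow_succ,
      mul_smul_comm, ← mul_assoc, mul_neg_one, neg_smul]

theorem ι_mul_of_mem_exteriorPower (v : M) {k : ℕ} {x : ExteriorAlgebra R M}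
    (hx : x ∈ ⋀[R]^k M) : ι R v * x = (-1 : R) ^ k • (x * ι R v) := by
  rw [← ιMulti_span_fixedDegree] at hx
  induction hx using Submodule.span_induction with
  | mem x hx =>
    obtain ⟨w, rfl⟩ := hx
    exact ι_mul_ιMulti v w
  | zero => simp
  | add x y _ _ hx hy => rw [mul_add, hx, hy, add_mul, smul_add]
  | smul c x _ hx => rw [mul_smul_comm, hx, smul_mul_assoc, smul_comm]

theorem mem_center_of_forall_ι_mul_eq {x : ExteriorAlgebra R M}
    (h : ∀ v, ι R v * x = x * ι R v) : x ∈ Subalgebra.center R (ExteriorAlgebra R M) := by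
  rw [Subalgebra.mem_center_iff]
  intro y
  induction y using ExteriorAlgebra.induction with
  | algebraMap r => exact Algebra.commutes r x
  | ι v => exact h v
  | mul y z hy hz => rw [mul_assoc, hz, ← mul_assoc, hy, mul_assoc]
  | add y z hy hz => rw [add_mul, mul_add, hy, hz]

theorem mem_center_of_mem_exteriorPower_of_even {k : ℕ} (hk : Even k)
    {x : ExteriorAlgebra R M} (hx : x ∈ ⋀[R]^k M) :
    x ∈ Subalgebra.center R (ExteriorAlgebra R M) :=
  mem_center_of_forall_ι_mul_eq fun v => by
    rw [ι_mul_of_mem_exteriorPower v hx, hk.neg_one_pow, one_smul]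

variable {I : Type*} [LinearOrder I]

theorem basis_mem_exteriorPower (b : Basis I R M) (s : Finset I) :
    b.ExteriorAlgebra s ∈ ⋀[R]^s.card M := by
  rw [basis_apply]
  exact ιMulti_range R _ ⟨_, rfl⟩

theorem basis_mul_basis_of_not_disjoint (b : Basis I R M) {s t : Finset I}
    (h : ¬Disjoint s t) : b.ExteriorAlgebra s * b.ExteriorAlgebra t = 0 :=
  basis_mul_of_not_disjoint b (Set.powersetCard.ofCard rfl) (Set.powersetCard.ofCard rfl) h

theorem exists_basis_mul_basis_of_disjoint (b : Basis I R M) {s t : Finset I}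
    (h : Disjoint s t) :
    ∃ ε : ℤˣ, b.ExteriorAlgebra s * b.ExteriorAlgebra t = ε • b.ExteriorAlgebra (s ∪ t) :=
  ⟨_, (basis_mul_of_disjoint b (Set.powersetCard.ofCard rfl) (Set.powersetCard.ofCard rfl) h).trans
    (by rw [← Finset.disjUnion_eq_union s t h]; rfl)⟩

variable [Fintype I]

theorem exteriorPower_eq_bot_of_card_lt (b : Basis I R M) {k : ℕ} (hk : Fintype.card I < k) :
    ⋀[R]^k M = ⊥ := by
  have : IsEmpty (Set.powersetCard I k) := by
    rw [Set.isEmpty_coe_sort, Set.powersetCard.eq_empty_iff, Nat.card_eq_fintype_card]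
    exact hk
  have := (b.exteriorPower k).repr.toEquiv.subsingleton
  exact Submodule.eq_bot_of_subsingleton

theorem mem_center_of_mem_exteriorPower_card (b : Basis I R M) {x : ExteriorAlgebra R M}
    (hx : x ∈ ⋀[R]^(Fintype.card I) M) : x ∈ Subalgebra.center R (ExteriorAlgebra R M) := by
  refine mem_center_of_forall_ι_mul_eq fun v => ?_
  have hvanish := exteriorPower_eq_bot_of_card_lt b (Nat.lt_succ_self (Fintype.card I))
  have hl : ι R v * x ∈ ⋀[R]^(1 + Fintype.card I) M :=
    SetLike.mul_mem_graded (ι_mem_exteriorPower_one v) hx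
  have hr : x * ι R v ∈ ⋀[R]^(Fintype.card I + 1) M :=
    SetLike.mul_mem_graded hx (ι_mem_exteriorPower_one v)
  rw [add_comm, hvanish, Submodule.mem_bot] at hl
  rw [hvanish, Submodule.mem_bot] at hr
  rw [hl, hr]

theorem mem_center_of_mem_exteriorPower_of_card_sub_one_le (b : Basis I R M)
    (hodd : Odd (Fintype.card I)) {k : ℕ} (hk : Fintype.card I - 1 ≤ k)
    {x : ExteriorAlgebra R M} (hx : x ∈ ⋀[R]^k M) :
    x ∈ Subalgebra.center R (ExteriorAlgebra R M) := by
  obtain hk | rfl | hk := lt_trichotomy k (Fintype.card I)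
  · obtain rfl : k = Fintype.card I - 1 := by omega
    exact mem_center_of_mem_exteriorPower_of_even (Nat.Odd.sub_odd hodd odd_one) hx
  · exact mem_center_of_mem_exteriorPower_card b hx
  · rw [exteriorPower_eq_bot_of_card_lt b hk, Submodule.mem_bot] at hx
    rw [hx]
    exact Subalgebra.zero_mem _

theorem basis_compl_mul_ne_zero (b : Basis I R M) {r : ExteriorAlgebra R M} {S₀ : Finset I}
    (hS₀ : S₀ ∈ (b.ExteriorAlgebra.repr r).support)
    (hmin : ∀ S ∈ (b.ExteriorAlgebra.repr r).support, S₀.card ≤ S.card) :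
    b.ExteriorAlgebra S₀ᶜ * r ≠ 0 := by
  set B := b.ExteriorAlgebra
  have hsingle : B S₀ᶜ * r = B.repr r S₀ • (B S₀ᶜ * B S₀) := by
    conv_lhs => rw [← B.sum_repr r]
    rw [Finset.mul_sum, Finset.sum_eq_single S₀ _ (by simp), mul_smul_comm]
    intro S _ hne
    rw [mul_smul_comm]
    by_cases hS : S ∈ (B.repr r).support
    · have hnot : ¬S ⊆ S₀ := fun hsub => hne (Finset.eq_of_subset_of_card_le hsub (hmin S hS))
      rw [basis_mul_basis_of_not_disjoint b (by rwa [disjoint_compl_left_iff]), smul_zero]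
    · rw [Finsupp.notMem_support_iff.mp hS, zero_smul]
  obtain ⟨ε, hε⟩ := exists_basis_mul_basis_of_disjoint b (disjoint_compl_left (a := S₀))
  rw [hsingle, hε, Finset.union_comm, Finset.union_compl, smul_comm, Ne,
    smul_eq_zero_iff_eq]
  intro h
  apply Finsupp.mem_support_iff.mp hS₀
  simpa [B] using congr(B.repr $h Finset.univ)

theorem basis_mul_ne_zero_of_subset_compl (b : Basis I R M) {r : ExteriorAlgebra R M}
    {S₀ U : Finset I} (hS₀ : S₀ ∈ (b.ExteriorAlgebra.repr r).support)
    (hmin : ∀ S ∈ (b.ExteriorAlgebra.repr r).support, S₀.card ≤ S.card) (hU : U ⊆ S₀ᶜ) :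
    b.ExteriorAlgebra U * r ≠ 0 := by
  intro h
  obtain ⟨ε, hε⟩ := exists_basis_mul_basis_of_disjoint b
    (disjoint_sdiff_self_left : Disjoint (S₀ᶜ \ U) U)
  rw [Finset.sdiff_union_of_subset hU] at hε
  apply basis_compl_mul_ne_zero b hS₀ hmin
  rw [← smul_eq_zero_iff_eq ε, ← smul_mul_assoc, ← hε, mul_assoc, h, mul_zero]

theorem basis_mul_mem_center (b : Basis I R M) (hodd : Odd (Fintype.card I)) {U : Finset I}
    {r : ExteriorAlgebra R M}
    (hr : ∀ S ∈ (b.ExteriorAlgebra.repr r).support, Fintype.card I - 1 ≤ U.card + S.card) :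
    b.ExteriorAlgebra U * r ∈ Subalgebra.center R (ExteriorAlgebra R M) := by
  set B := b.ExteriorAlgebra
  rw [← B.sum_repr r, Finset.mul_sum]
  refine Subalgebra.sum_mem _ fun S _ => ?_
  rw [mul_smul_comm]
  by_cases hS : S ∈ (B.repr r).support
  · exact Subalgebra.smul_mem _ (mem_center_of_mem_exteriorPower_of_card_sub_one_le b hodd
      (hr S hS) (SetLike.mul_mem_graded (basis_mem_exteriorPower b U)
        (basis_mem_exteriorPower b S))) _
  · rw [Finsupp.notMem_support_iff.mp hS, zero_smul]
    exact Subalgebra.zero_mem _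

theorem isCentrallyEssential_of_basis (b : Basis I R M) (hodd : Odd (Fintype.card I)) :
    IsCentrallyEssential (ExteriorAlgebra R M) := by
  intro r hr
  have hsupp : (b.ExteriorAlgebra.repr r).support.Nonempty := by simpa using hr
  obtain ⟨S₀, hS₀, hmin⟩ := Finset.exists_min_image _ Finset.card hsupp
  obtain ⟨U, hUS₀, hUeven, hUcard⟩ := S₀ᶜ.exists_subset_even_card_add_one_ge
  have hdeg : Fintype.card I - 1 ≤ U.card + S₀.card := by
    rw [Finset.card_compl] at hUcard
    have := S₀.card_le_univ
    omega
  exact ⟨b.ExteriorAlgebra U,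
    mem_center_of_mem_exteriorPower_of_even hUeven (basis_mem_exteriorPower b U),
    basis_mul_ne_zero_of_subset_compl b hS₀ hmin hUS₀,
    basis_mul_mem_center b hodd fun S hS => hdeg.trans (Nat.add_le_add_left (hmin S hS) _)⟩

end CommRing

section Field

variable {K V : Type*} [Field K] [AddCommGroup V] [Module K V]

theorem ι_mul_ι_ne_zero {x y : V} (hxy : LinearIndependent K ![x, y]) : ι K x * ι K y ≠ 0 := by
  have huniv : (Finset.univ : Finset (Fin 2)) ∈ Set.powersetCard (Fin 2) 2 := by simp
  have hne := (exteriorPower.ιMulti_family_linearIndependent_field (n := 2) hxy).ne_zero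
    ⟨_, huniv⟩
  have hrefl : Set.powersetCard.ofFinEmbEquiv.symm ⟨_, huniv⟩ = RelEmbedding.refl (· ≤ ·) :=
    (Finset.orderEmbOfFin_unique' _ (by simp)).symm
  contrapose! hne
  ext1
  simpa [ExteriorAlgebra.ιMulti_family, hrefl, ιMulti_apply, List.ofFn_succ] using hne

theorem ι_mul_ι_ne_ι_mul_ι (h2 : (2 : K) ≠ 0) {x y : V} (hxy : LinearIndependent K ![x, y]) :
    ι K x * ι K y ≠ ι K y * ι K x := by
  intro hcomm
  have htwice : (2 : K) • (ι K x * ι K y) = 0 := by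
    rw [two_smul]
    nth_rw 2 [hcomm]
    exact ι_add_mul_swap x y
  exact ι_mul_ι_ne_zero hxy ((smul_eq_zero.mp htwice).resolve_left h2)

end Field

end ExteriorAlgebra

/-- Over a finite field of odd characteristic, the exterior algebra of a vector
space of odd dimension `≥ 3` is a finite noncommutative centrally essential
ring. -/
theorem exteriorAlgebra_finite_noncommutative_centrallyEssential
    (F : Type*) [Field F] [Finite F] (hchar : Odd (ringChar F))
    (V : Type*) [AddCommGroup V] [Module F V] [FiniteDimensional F V]
    (hodd : Odd (Module.finrank F V)) (hdim : 3 ≤ Module.finrank F V) :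
    Finite (ExteriorAlgebra F V) ∧
      (∃ a b : ExteriorAlgebra F V, a * b ≠ b * a) ∧
      IsCentrallyEssential (ExteriorAlgebra F V) := by
  let b := Module.finBasis F V
  refine ⟨?_, ?_, isCentrallyEssential_of_basis b (by simpa using hodd)⟩
  · have := Module.Finite.of_basis b.ExteriorAlgebra
    exact Module.finite_of_finite F
  · have h2 : (2 : F) ≠ 0 := Ring.two_ne_zero fun h => absurd (h ▸ hchar) (by decide)
    have hrank : 1 < Module.rank F V := by
      rw [← Module.finrank_eq_rank]
      exact_mod_cast (by omega : 1 < Module.finrank F V)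
    have : Nontrivial V := Module.nontrivial_of_finrank_pos (R := F) (by omega)
    obtain ⟨x, hx⟩ := exists_ne (0 : V)
    obtain ⟨y, hxy⟩ := exists_linearIndependent_pair_of_one_lt_rank hrank hx
    exact ⟨_, _, ι_mul_ι_ne_ι_mul_ι h2 hxy⟩
end

section
/- Let R be a centrally essential ring. For any n ∈ ℕ and elements x₁,…,xₙ, y₁,…,yₙ, r ∈ R, if x₁y₁ + … + xₙyₙ = 1 and x₁ry₁ + … + xₙryₙ = 0, then r = 0. -/
theorem quasi_identity_of_centrallyEssential (R : Type*) [Ring R]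
    (hR : IsCentrallyEssential R) (n : ℕ) (x y : Fin n → R) (r : R)
    (h1 : ∑ i, x i * y i = 1) (h2 : ∑ i, x i * r * y i = 0) : r = 0 := by
  by_contra hr
  obtain ⟨c, hc, hcr, hcrc⟩ := hR r hr
  rw [Subring.mem_center_iff] at hc hcrc
  apply hcr
  have e1 : ∀ i, x i * (c * r) * y i = c * r * (x i * y i) := fun i => by
    rw [hcrc (x i), mul_assoc]
  have e2 : ∀ i, x i * (c * r) * y i = c * (x i * r * y i) := fun i => by
    rw [← mul_assoc (x i) c r, hc (x i), mul_assoc c (x i) r, mul_assoc]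
  calc c * r = c * r * ∑ i, x i * y i := by rw [h1, mul_one]
    _ = ∑ i, c * r * (x i * y i) := by rw [Finset.mul_sum]
    _ = ∑ i, x i * (c * r) * y i := by simp_rw [e1]
    _ = ∑ i, c * (x i * r * y i) := by simp_rw [e2]
    _ = c * ∑ i, x i * r * y i := (Finset.mul_sum _ _ _).symm
    _ = 0 := by rw [h2, mul_zero]
end

section
/- In a centrally essential ring, every idempotent is central. -/
/-- In a centrally essential ring, every idempotent is central. -/
theorem idempotent_central_of_centrallyEssential (R : Type*) [Ring R]
    (hR : IsCentrallyEssential R) (e : R) (he : e * e = e) :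
    e ∈ Subring.center R := by
  have key : ∀ f : R, f * f = f → ∀ r : R, f * r * (1 - f) = 0 := by
    intro f hf r
    by_contra h
    obtain ⟨c, hc, hne, hcen⟩ := hR _ h
    rw [Subring.mem_center_iff] at hc hcen
    set d := c * (f * r * (1 - f)) with hd
    have hff : (1 - f) * f = 0 := by rw [sub_mul, one_mul, hf, sub_self]
    have hde : d * f = 0 := by
      calc d * f = c * (f * r * ((1 - f) * f)) := by rw [hd]; noncomm_ring
        _ = 0 := by rw [hff, mul_zero, mul_zero]
    have hed : f * d = d := by
      calc f * d = c * ((f * f) * r * (1 - f)) := by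
            rw [hd, ← mul_assoc, hc f, mul_assoc]; noncomm_ring
        _ = d := by rw [hf]
    have : d = 0 := by rw [← hed, hcen f, hde]
    exact hne this
  have h1 := key e he
  have h2 := key (1 - e) (by
    have : (1 - e) * (1 - e) = 1 - e - e + e * e := by noncomm_ring
    rw [this, he]; abel)
  rw [Subring.mem_center_iff]
  intro r
  have a1 : e * r = e * r * e := by
    have := h1 r
    rw [mul_sub, mul_one, sub_eq_zero] at this
    exact this
  have a2 : r * e = e * r * e := by
    have := h2 r
    rw [sub_sub_cancel, sub_mul, one_mul, sub_mul, sub_eq_zero] at this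
    exact this
  rw [a2, a1, mul_assoc (e * r), he]
end

section
/- If R is a centrally essential local ring, then the quotient ring R/J(R) by the Jacobson radical is commutative. -/
/-- In a local ring, a left-invertible element is a unit. -/
lemma isUnit_of_left_inverse {R : Type*} [Ring R] [IsLocalRing R] {v w : R}
    (h : w * v = 1) : IsUnit v := by
  have hidem : (v * w) * (v * w) = v * w := by
    rw [mul_assoc, ← mul_assoc w v w, h, one_mul]
  rcases IsLocalRing.isUnit_or_isUnit_of_add_one (a := v * w) (b := 1 - v * w) (by abel) with
    he | he
  · -- v * w unit, and (v*w)*(v*w) = v*w implies v*w = 1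
    have h1 : v * w = 1 :=
      he.mul_left_cancel (show (v * w) * (v * w) = (v * w) * 1 by rw [mul_one, hidem])
    exact ⟨⟨v, w, h1, h⟩, rfl⟩
  · -- 1 - v*w unit, and (1 - v*w)*(v*w) = 0 implies v*w = 0, contradiction
    have h0 : (1 - v * w) * (v * w) = (1 - v * w) * 0 := by
      rw [mul_zero, sub_mul, one_mul, hidem, sub_self]
    have hvw : v * w = 0 := he.mul_left_cancel h0
    have hw : w = 0 := by
      have : w * (v * w) = w := by rw [← mul_assoc, h, one_mul]
      rw [hvw, mul_zero] at this
      exact this.symm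
    rw [hw, zero_mul] at h
    exact absurd h.symm one_ne_zero

/-- In a local ring, every nonunit lies in the Jacobson radical of `⊥`. -/
lemma mem_jacobson_bot_of_not_isUnit {R : Type*} [Ring R] [IsLocalRing R] {v : R}
    (hv : ¬ IsUnit v) : v ∈ Ideal.jacobson (⊥ : Ideal R) := by
  rw [Ideal.jacobson, Ideal.mem_sInf]
  rintro M ⟨-, hM⟩
  by_contra hvM
  -- M ⊔ span {v} = ⊤
  have hlt : M < M ⊔ Ideal.span {v} := by
    refine lt_of_le_of_ne le_sup_left fun hEq => hvM ?_
    have : v ∈ M ⊔ Ideal.span {v} :=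
      Submodule.mem_sup_right (Submodule.mem_span_singleton_self v)
    rwa [← hEq] at this
  have htop : M ⊔ Ideal.span {v} = ⊤ := hM.1.2 _ hlt
  have h1 : (1 : R) ∈ M ⊔ Ideal.span {v} := htop ▸ Submodule.mem_top
  rcases Submodule.mem_sup.mp h1 with ⟨m, hm, s, hs, hms⟩
  rcases Submodule.mem_span_singleton.mp hs with ⟨r, rfl⟩
  rcases IsLocalRing.isUnit_or_isUnit_of_add_one hms with hum | hus
  · exact hM.ne_top (M.eq_top_of_isUnit_mem hm hum)
  · rcases hus with ⟨u, hu⟩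
    have : ((↑u⁻¹ : R) * r) * v = 1 := by
      rw [mul_assoc]
      show (↑u⁻¹ : R) * (r • v) = 1
      rw [← hu, u.inv_mul]
    exact hv (isUnit_of_left_inverse this)

/-- If `R` is a centrally essential local ring, then `R/J(R)` is commutative,
i.e. every commutator lies in the Jacobson radical. -/
theorem quotient_jacobson_commutative_of_centrallyEssential_local
    (R : Type*) [Ring R] [IsLocalRing R] (hR : IsCentrallyEssential R) :
    ∀ a b : R, a * b - b * a ∈ Ideal.jacobson (⊥ : Ideal R) := by
  intro a b
  apply mem_jacobson_bot_of_not_isUnit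
  intro hv
  set v := a * b - b * a with hvdef
  -- apply central essentiality to v (v ≠ 0 since it is a unit)
  have hv0 : v ≠ 0 := hv.ne_zero
  obtain ⟨c, hc, hcv0, hcv⟩ := hR v hv0
  rw [Subring.mem_center_iff] at hc
  -- y = c * b ≠ 0, since c * v = a * y - y * a
  have key : ∀ z : R, (∀ g : R, g * z = z * g) → z * c * v = a * (z * (c * b)) - (z * (c * b)) * a := by
    intro z hz
    have hzc : ∀ g : R, g * (z * c) = (z * c) * g := by
      intro g
      rw [mul_assoc, ← hc g, ← mul_assoc, hz g, mul_assoc]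
    calc z * c * v = z * c * (a * b) - z * c * (b * a) := by rw [hvdef, mul_sub]
      _ = a * (z * (c * b)) - (z * (c * b)) * a := by
          rw [← mul_assoc z c b, mul_assoc (z * c) b a, ← mul_assoc a (z * c) b,
            hzc a, mul_assoc (z * c) a b]
  have hy0 : c * b ≠ 0 := by
    intro h
    apply hcv0
    have h1 := key 1 (fun g => by rw [one_mul, mul_one])
    simp only [one_mul, h, mul_zero, zero_mul, sub_zero] at h1
    exact h1
  obtain ⟨z, hz, hzy0, hzy⟩ := hR (c * b) hy0
  rw [Subring.mem_center_iff] at hz hzy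
  -- z * (c * b) central implies z * c * v = 0
  have hzcv : z * c * v = 0 := by
    rw [key z hz, hzy a, sub_self]
  -- cancel the unit v
  have hzc : z * c = 0 := by
    rcases hv with ⟨u, hu⟩
    have : z * c * v * ↑u⁻¹ = 0 := by rw [hzcv, zero_mul]
    rwa [mul_assoc, ← hu, u.mul_inv, mul_one] at this
  apply hzy0
  rw [← mul_assoc, hzc, zero_mul]
end

section
/- A direct factor of a centrally essential ring is centrally essential: if e is a central idempotent of a centrally essential ring R, then the ring Re is centrally essential. -/
/-- For a central idempotent `e`, the set `Re = {x | x * e = x}` is a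
non-unital subring of `R`. -/
def cornerSubring (R : Type*) [Ring R] (e : R) : NonUnitalSubring R where
  carrier := {x | x * e = x}
  zero_mem' := zero_mul e
  add_mem' := by intro a b ha hb; simpa [add_mul] using congrArg₂ (· + ·) ha hb
  neg_mem' := by intro a ha; simpa [neg_mul] using congrArg Neg.neg ha
  mul_mem' := by intro a b _ hb; show a * b * e = a * b; rw [mul_assoc, hb]

/-- If `e` is a central idempotent, then `Re` is a (unital) ring with
identity `e`. -/
def cornerRing (R : Type*) [Ring R] (e : R) (he : IsIdempotentElem e)
    (hc : e ∈ Subring.center R) : Ring (cornerSubring R e) :=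
  { (inferInstance : NonUnitalRing (cornerSubring R e)) with
    one := ⟨e, he⟩
    one_mul := fun x => Subtype.ext (by
      have := x.2
      calc (e : R) * x = (x : R) * e := (Subring.mem_center_iff.mp hc x).symm
        _ = x := x.2)
    mul_one := fun x => Subtype.ext x.2 }

/-- A direct factor of a centrally essential ring is centrally essential: if
`e` is a central idempotent of a centrally essential ring `R`, then `Re` is
centrally essential. -/
theorem cornerRing_centrallyEssential (R : Type*) [Ring R]
    (hR : IsCentrallyEssential R) (e : R) (he : IsIdempotentElem e)
    (hc : e ∈ Subring.center R) :
    @IsCentrallyEssential (cornerSubring R e) (cornerRing R e he hc) := by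
  letI : Ring (cornerSubring R e) := cornerRing R e he hc
  intro r hr
  have hr0 : (r : R) ≠ 0 := fun h => hr (Subtype.ext h)
  obtain ⟨c, hcC, hcr, hcrC⟩ := hR r hr0
  have hce : e * c = c * e := (Subring.mem_center_iff.mp hcC e)
  have her : e * (r : R) = (r : R) := by
    have := Subring.mem_center_iff.mp hc (r : R)
    rw [← this]; exact r.2
  have hmem : c * e ∈ cornerSubring R e := by
    show (c * e) * e = c * e
    rw [mul_assoc, he]
  refine ⟨⟨c * e, hmem⟩, ?_, ?_, ?_⟩
  · rw [Subring.mem_center_iff]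
    intro g
    apply Subtype.ext
    show (g : R) * (c * e) = (c * e) * (g : R)
    have h1 : (g : R) * c = c * (g : R) := Subring.mem_center_iff.mp hcC g
    have h2 : (g : R) * e = e * (g : R) := Subring.mem_center_iff.mp hc g
    rw [← mul_assoc, h1, mul_assoc, h2, ← mul_assoc]
  · intro h0
    apply hcr
    have : ((⟨c * e, hmem⟩ * r : cornerSubring R e) : R) = c * (r : R) := by
      show (c * e) * (r : R) = c * (r : R)
      rw [mul_assoc, her]
    rw [← this]
    exact congrArg Subtype.val h0
  · rw [Subring.mem_center_iff]
    intro g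
    apply Subtype.ext
    show (g : R) * ((c * e) * (r : R)) = ((c * e) * (r : R)) * (g : R)
    rw [mul_assoc, her]
    exact Subring.mem_center_iff.mp hcrC (g : R)
end

section
/- If R is a centrally essential semiperfect ring with center C, then the socle of R as a C-module is contained in C. -/
/-- A ring is *semiperfect* if `R/J(R)` is semisimple (expressed via a
surjective ring homomorphism with kernel `J(R)` onto a semisimple ring) and
idempotents lift modulo `J(R)`. -/
def IsSemiperfectRing (R : Type*) [Ring R] : Prop :=
  (∃ (S : Type) (_ : Ring S) (_ : IsSemisimpleRing S) (f : R →+* S),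
      Function.Surjective f ∧ RingHom.ker f = Ideal.jacobson (⊥ : Ideal R)) ∧
    ∀ x : R, x * x - x ∈ Ideal.jacobson (⊥ : Ideal R) →
      ∃ e : R, e * e = e ∧ e - x ∈ Ideal.jacobson (⊥ : Ideal R)

/-- The socle of `R` as a module over its center: the sum of all simple
submodules of `R` over `C(R)`. -/
def centerSocle (R : Type*) [Ring R] : Submodule (Subring.center R) R :=
  sSup {S : Submodule (Subring.center R) R | IsSimpleModule (Subring.center R) S}

/-! A simple submodule meets an essential submodule nontrivially, hence lies inside it. For a
centrally essential ring this applies to the center, viewed as a submodule of `R` over itself. -/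

section EssentialSubmodule

variable {A M : Type*} [Ring A] [AddCommGroup M] [Module A M] {N : Submodule A M}

theorem Submodule.le_of_isSimpleModule_of_forall_smul_mem
    (hN : ∀ x : M, x ≠ 0 → ∃ a : A, a • x ≠ 0 ∧ a • x ∈ N)
    (S : Submodule A M) [IsSimpleModule A S] : S ≤ N := by
  have hS : IsAtom S := isSimpleModule_iff_isAtom.mp ‹_›
  refine hS.not_disjoint_iff_le.mp fun hdisj => ?_
  obtain ⟨x, hxS, hx0⟩ := Submodule.exists_mem_ne_zero_of_ne_bot hS.1
  obtain ⟨a, ha0, haN⟩ := hN x hx0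
  exact ha0 (Submodule.disjoint_def.mp hdisj _ (S.smul_mem a hxS) haN)

theorem Submodule.sSup_isSimpleModule_le_of_forall_smul_mem
    (hN : ∀ x : M, x ≠ 0 → ∃ a : A, a • x ≠ 0 ∧ a • x ∈ N) :
    sSup {S : Submodule A M | IsSimpleModule A S} ≤ N :=
  sSup_le fun S (_ : IsSimpleModule A S) => Submodule.le_of_isSimpleModule_of_forall_smul_mem hN S

end EssentialSubmodule

theorem IsCentrallyEssential.centerSocle_le {R : Type*} [Ring R] (hR : IsCentrallyEssential R) :
    centerSocle R ≤ Subalgebra.toSubmodule (Subalgebra.center (Subring.center R) R) :=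
  Submodule.sSup_isSimpleModule_le_of_forall_smul_mem fun r hr => by
    obtain ⟨c, hc, hcr0, hcr⟩ := hR r hr
    exact ⟨⟨c, hc⟩, hcr0, hcr⟩

theorem centerSocle_le_center_of_centrallyEssential_semiperfect_general
    (R : Type*) [Ring R] (hR : IsCentrallyEssential R) :
    ∀ x ∈ centerSocle R, x ∈ Subring.center R :=
  fun _ hx => hR.centerSocle_le hx

/-- If `R` is a centrally essential semiperfect ring with center `C`, then
`Soc(R_C) ⊆ C`. -/
theorem centerSocle_le_center_of_centrallyEssential_semiperfect
    (R : Type*) [Ring R] (hR : IsCentrallyEssential R)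
    (hsp : IsSemiperfectRing R) :
    ∀ x ∈ centerSocle R, x ∈ Subring.center R :=
  centerSocle_le_center_of_centrallyEssential_semiperfect_general R hR
end

section
/- If R is a centrally essential semiperfect ring, then the left socle of R equals the right socle of R: Soc(_RR) = Soc(R_R). -/
/-- The left socle of a ring: the sum of all simple left submodules. -/
def leftSocle (R : Type*) [Ring R] : Submodule R R :=
  sSup {S : Submodule R R | IsSimpleModule R S}

/-- The right socle of a ring: the sum of all simple right submodules,
viewed as submodules over the opposite ring. -/
def rightSocle (R : Type*) [Ring R] : Submodule Rᵐᵒᵖ R :=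
  sSup {S : Submodule Rᵐᵒᵖ R | IsSimpleModule Rᵐᵒᵖ S}

namespace Submodule

variable {A B M : Type*} [Ring A] [Ring B] [AddCommGroup M] [Module A M] [Module B M]

theorem span_singleton_eq_of_isAtom {S : Submodule A M} (hS : IsAtom S) {x : M}
    (hx : x ∈ S) (hx0 : x ≠ 0) : span A {x} = S :=
  (hS.le_iff.mp ((span_singleton_le_iff_mem x S).mpr hx)).resolve_left
    (mt span_singleton_eq_bot.mp hx0)

variable {Z : Set M}

theorem isAtom_span_singleton_of_isAtom
    (hZ : ∀ z ∈ Z, (span A {z} : Set M) = span B {z})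
    (hB : ∀ T : Submodule B M, T ≠ ⊥ → ∃ z ∈ Z, z ∈ T ∧ z ≠ 0)
    {z : M} (hz : z ∈ Z) (hatom : IsAtom (span A {z})) : IsAtom (span B {z}) := by
  have hz0 : z ≠ 0 := fun h => hatom.1 (span_singleton_eq_bot.mpr h)
  refine isAtom_iff_le_of_ge.mpr ⟨mt span_singleton_eq_bot.mp hz0, fun T hT hTz => ?_⟩
  obtain ⟨w, hwZ, hwT, hw0⟩ := hB T hT
  have hwz : w ∈ span A {z} := by
    rw [← SetLike.mem_coe, hZ z hz]
    exact hTz hwT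
  have hspan : span B {z} = span B {w} := SetLike.coe_injective <| by
    rw [← hZ z hz, ← hZ w hwZ, span_singleton_eq_of_isAtom hatom hwz hw0]
  rw [hspan]
  exact (span_singleton_le_iff_mem w T).mpr hwT

theorem toAddSubmonoid_image_setOf_isAtom_subset
    (hZ : ∀ z ∈ Z, (span A {z} : Set M) = span B {z})
    (hA : ∀ S : Submodule A M, S ≠ ⊥ → ∃ z ∈ Z, z ∈ S ∧ z ≠ 0)
    (hB : ∀ T : Submodule B M, T ≠ ⊥ → ∃ z ∈ Z, z ∈ T ∧ z ≠ 0) :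
    toAddSubmonoid '' {S : Submodule A M | IsAtom S} ⊆
      toAddSubmonoid '' {T : Submodule B M | IsAtom T} := by
  rintro _ ⟨S, hS, rfl⟩
  obtain ⟨z, hzZ, hzS, hz0⟩ := hA S hS.1
  obtain rfl := span_singleton_eq_of_isAtom hS hzS hz0
  exact ⟨span B {z}, isAtom_span_singleton_of_isAtom hZ hB hzZ hS,
    SetLike.coe_injective (hZ z hzZ).symm⟩

theorem coe_sSup_setOf_isSimpleModule_eq
    (hZ : ∀ z ∈ Z, (span A {z} : Set M) = span B {z})
    (hA : ∀ S : Submodule A M, S ≠ ⊥ → ∃ z ∈ Z, z ∈ S ∧ z ≠ 0)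
    (hB : ∀ T : Submodule B M, T ≠ ⊥ → ∃ z ∈ Z, z ∈ T ∧ z ≠ 0) :
    ((sSup {S : Submodule A M | IsSimpleModule A S} : Submodule A M) : Set M) =
      (sSup {T : Submodule B M | IsSimpleModule B T} : Submodule B M) := by
  simp only [isSimpleModule_iff_isAtom]
  change ((sSup (α := Submodule A M) _).toAddSubmonoid : Set M) =
    (sSup (α := Submodule B M) _).toAddSubmonoid
  rw [toAddSubmonoid_sSup, toAddSubmonoid_sSup,
    (toAddSubmonoid_image_setOf_isAtom_subset hZ hA hB).antisymm
      (toAddSubmonoid_image_setOf_isAtom_subset (fun z hz => (hZ z hz).symm) hB hA)]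

theorem coe_span_singleton_eq_op_of_mem_center {R : Type*} [Ring R] {z : R}
    (hz : z ∈ Subring.center R) : (span R {z} : Set R) = span Rᵐᵒᵖ {z} := by
  ext x
  simp only [SetLike.mem_coe, mem_span_singleton, MulOpposite.smul_eq_mul_unop, smul_eq_mul]
  constructor
  · rintro ⟨a, rfl⟩
    exact ⟨MulOpposite.op a, (Subring.mem_center_iff.mp hz a).symm⟩
  · rintro ⟨a, rfl⟩
    exact ⟨a.unop, Subring.mem_center_iff.mp hz a.unop⟩

end Submodule

namespace IsCentrallyEssential

variable {R : Type*} [Ring R]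

theorem exists_mem_center_mem_ne_zero_left (hR : IsCentrallyEssential R)
    (I : Submodule R R) (hI : I ≠ ⊥) : ∃ z ∈ (Subring.center R : Set R), z ∈ I ∧ z ≠ 0 := by
  obtain ⟨x, hx, hx0⟩ := Submodule.exists_mem_ne_zero_of_ne_bot hI
  obtain ⟨c, -, hcx0, hcx⟩ := hR x hx0
  exact ⟨c * x, hcx, I.smul_mem c hx, hcx0⟩

theorem exists_mem_center_mem_ne_zero_right (hR : IsCentrallyEssential R)
    (I : Submodule Rᵐᵒᵖ R) (hI : I ≠ ⊥) : ∃ z ∈ (Subring.center R : Set R), z ∈ I ∧ z ≠ 0 := by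
  obtain ⟨x, hx, hx0⟩ := Submodule.exists_mem_ne_zero_of_ne_bot hI
  obtain ⟨c, hc, hcx0, hcx⟩ := hR x hx0
  have hmem : c * x ∈ I := by
    rw [← Subring.mem_center_iff.mp hc x]
    exact I.smul_mem (MulOpposite.op c) hx
  exact ⟨c * x, hcx, hmem, hcx0⟩

end IsCentrallyEssential

theorem leftSocle_eq_rightSocle_of_centrallyEssential_semiperfect_general
    (R : Type*) [Ring R] (hR : IsCentrallyEssential R) :
    (leftSocle R : Set R) = (rightSocle R : Set R) :=
  Submodule.coe_sSup_setOf_isSimpleModule_eq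
    (fun _ hz => Submodule.coe_span_singleton_eq_op_of_mem_center hz)
    hR.exists_mem_center_mem_ne_zero_left hR.exists_mem_center_mem_ne_zero_right

/-- In a centrally essential semiperfect ring, the left socle equals the
right socle. -/
theorem leftSocle_eq_rightSocle_of_centrallyEssential_semiperfect
    (R : Type*) [Ring R] (hR : IsCentrallyEssential R)
    (hsp : IsSemiperfectRing R) :
    (leftSocle R : Set R) = (rightSocle R : Set R) :=
  leftSocle_eq_rightSocle_of_centrallyEssential_semiperfect_general R hR
end

section
/- If R is a centrally essential ring whose center C is a semiprime (reduced commutative) ring, then R is commutative. -/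
/-- A central element whose square is zero is zero, when the center is reduced. -/
lemma central_sq_zero_eq_zero {R : Type*} [Ring R]
    (hred : IsReduced (Subring.center R)) {d : R} (hd : d ∈ Subring.center R)
    (h2 : d * d = 0) : d = 0 := by
  have hnil : IsNilpotent (⟨d, hd⟩ : Subring.center R) := by
    refine ⟨2, ?_⟩
    ext
    simpa [pow_two] using h2
  exact congrArg Subtype.val hnil.eq_zero

/-- If `R` is a centrally essential ring whose center is reduced (has no
nonzero nilpotent elements), then `R` is commutative. -/
theorem commutative_of_centrallyEssential_reduced_center (R : Type*) [Ring R]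
    (hR : IsCentrallyEssential R) (hred : IsReduced (Subring.center R)) :
    ∀ a b : R, a * b = b * a := by
  intro a b
  by_contra h
  have hu : a * b - b * a ≠ 0 := sub_ne_zero_of_ne h
  obtain ⟨c, hc, hcu, hcuC⟩ := hR _ hu
  set u : R := a * b - b * a with hu_def
  set d : R := c * u with hd_def
  set x : R := c * a with hx_def
  have hcc : ∀ g : R, g * c = c * g := Subring.mem_center_iff.mp hc
  have hdc : ∀ g : R, g * d = d * g := Subring.mem_center_iff.mp hcuC
  -- d = x*b - b*x
  have hdxb : d = x * b - b * x := by
    rw [hd_def, hu_def, hx_def, mul_sub]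
    congr 1
    · rw [mul_assoc]
    · rw [← mul_assoc, ← hcc b, mul_assoc]
  -- d * d = x * (b*d) - (b*d) * x
  have hdd : d * d = x * (b * d) - (b * d) * x := by
    calc d * d = (x * b - b * x) * d := by rw [← hdxb]
      _ = x * (b * d) - (b * d) * x := by
          rw [sub_mul, mul_assoc x b d, mul_assoc b x d, hdc x, ← mul_assoc b d x]
  by_cases hbd : b * d = 0
  · have h2 : d * d = 0 := by rw [hdd, hbd, mul_zero, zero_mul, sub_zero]
    exact hcu (central_sq_zero_eq_zero hred hcuC h2)
  · obtain ⟨c', hc', hne, hcent⟩ := hR _ hbd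
    have hcc' : ∀ g : R, g * c' = c' * g := Subring.mem_center_iff.mp hc'
    have hcbd : ∀ g : R, g * (c' * (b * d)) = c' * (b * d) * g :=
      Subring.mem_center_iff.mp hcent
    -- c' * (d * d) = 0
    have key : c' * (d * d) = 0 := by
      have e : c' * (d * d) = x * (c' * (b * d)) - (c' * (b * d)) * x := by
        rw [hdd, mul_sub]
        congr 1
        · rw [← mul_assoc, ← hcc' x, mul_assoc]
        · rw [← mul_assoc, mul_assoc]
      rw [e, hcbd x, sub_self]
    -- (c'*d)^2 = 0
    have hsq : (c' * d) * (c' * d) = 0 := by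
      have e1 : (c' * d) * (c' * d) = c' * (c' * (d * d)) := by
        rw [mul_assoc, ← mul_assoc d, ← hdc c', mul_assoc c' d d]
      rw [e1, key, mul_zero]
    have hc'd : c' * d ∈ Subring.center R := Subring.mul_mem _ hc' hcuC
    have hzero : c' * d = 0 := central_sq_zero_eq_zero hred hc'd hsq
    apply hne
    calc c' * (b * d) = b * (c' * d) := by rw [← mul_assoc, ← hcc' b, mul_assoc]
      _ = 0 := by rw [hzero, mul_zero]
end

section
/- Every centrally essential semiprime ring is commutative. -/
/-- In a semiprime ring, a central element with zero square is zero. -/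
theorem central_sq_zero_eq_zero_s17 {R : Type*} [Ring R]
    (hsemiprime : ∀ I : Ideal R, (∀ x ∈ I, ∀ r : R, x * r ∈ I) →
      (∀ x ∈ I, ∀ y ∈ I, x * y = 0) → I = ⊥)
    {z : R} (hz : z ∈ Subring.center R) (h2 : z * z = 0) : z = 0 := by
  have hzc : ∀ g : R, g * z = z * g := Subring.mem_center_iff.mp hz
  have hI := hsemiprime (Ideal.span {z}) ?_ ?_
  · have hm : z ∈ Ideal.span ({z} : Set R) := Ideal.subset_span rfl
    rw [hI] at hm
    simpa using hm
  · intro x hx r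
    rw [Ideal.mem_span_singleton'] at hx ⊢
    obtain ⟨a, rfl⟩ := hx
    exact ⟨a * r, by rw [mul_assoc, hzc r, ← mul_assoc]⟩
  · intro x hx y hy
    rw [Ideal.mem_span_singleton'] at hx hy
    obtain ⟨a, rfl⟩ := hx; obtain ⟨b, rfl⟩ := hy
    have h : z * (b * z) = 0 := by rw [← mul_assoc, ← hzc b, mul_assoc, h2, mul_zero]
    rw [mul_assoc, h, mul_zero]

/-- A centrally essential semiprime ring (no nonzero two-sided ideal with zero
square) is commutative. -/
theorem commutative_of_centrallyEssential_semiprime (R : Type*) [Ring R]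
    (hR : IsCentrallyEssential R)
    (hsemiprime : ∀ I : Ideal R, (∀ x ∈ I, ∀ r : R, x * r ∈ I) →
      (∀ x ∈ I, ∀ y ∈ I, x * y = 0) → I = ⊥) :
    ∀ a b : R, a * b = b * a := by
  intro a b
  by_contra hne
  have hd : a * b - b * a ≠ 0 := sub_ne_zero.mpr hne
  obtain ⟨c, hcC, hch, hchC⟩ := hR _ hd
  have hcc : ∀ g : R, g * c = c * g := Subring.mem_center_iff.mp hcC
  set x := c * a with hx
  set z := c * (a * b - b * a) with hzdef
  have hzC : z ∈ Subring.center R := hchC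
  have hzc : ∀ g : R, g * z = z * g := Subring.mem_center_iff.mp hzC
  -- z = x * b - b * x
  have hz : z = x * b - b * x := by
    rw [hzdef, hx, mul_sub, ← mul_assoc c b a, ← hcc b, mul_assoc b c a, ← mul_assoc c a b]
  -- z * x ≠ 0
  have hzx : z * x ≠ 0 := by
    intro h0
    have hz2 : z * z = 0 := by
      have e1 : z * (x * b) = 0 := by rw [← mul_assoc, h0, zero_mul]
      have e2 : z * (b * x) = 0 := by rw [← mul_assoc, ← hzc b, mul_assoc, h0, mul_zero]
      nth_rewrite 2 [hz]
      rw [mul_sub, e1, e2, sub_zero]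
    exact hch (central_sq_zero_eq_zero_s17 hsemiprime hzC hz2)
  obtain ⟨c', hc'C, h1, h2⟩ := hR _ hzx
  have hc'c : ∀ g : R, g * c' = c' * g := Subring.mem_center_iff.mp hc'C
  set u := c' * z with hu
  have huC : u ∈ Subring.center R := Subring.mul_mem _ hc'C hzC
  have huc : ∀ g : R, g * u = u * g := Subring.mem_center_iff.mp huC
  -- u * x ∈ center, so it commutes with b
  have huxC : u * x ∈ Subring.center R := by rwa [hu, mul_assoc]
  have huxc : ∀ g : R, g * (u * x) = (u * x) * g := Subring.mem_center_iff.mp huxC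
  -- hence u * z = 0
  have huz : u * z = 0 := by
    have e3 : u * (x * b) = (u * x) * b := (mul_assoc u x b).symm
    have e4 : u * (b * x) = b * (u * x) := by rw [← mul_assoc, ← huc b, mul_assoc]
    rw [hz, mul_sub, e3, e4, huxc b, sub_self]
  -- then u * u = 0
  have huu : u * u = 0 := by
    have e5 : u * u = c' * (u * z) := by
      rw [hu, mul_assoc, ← mul_assoc z c' z, ← hzc c', mul_assoc]
    rw [e5, huz, mul_zero]
  have hu0 : u = 0 := central_sq_zero_eq_zero_s17 hsemiprime huC huu
  apply h1
  rw [← mul_assoc, ← hu, hu0, zero_mul]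
end

section
/- Let R be a right or left perfect ring with center C. Then R is centrally essential if and only if Soc(R_C) ⊆ C and every idempotent of R is central. -/
/-- `R` is left perfect: it is semiperfect and `J(R)` is left `T`-nilpotent
(for every sequence `x₀, x₁, …` in `J(R)` some product `x₀x₁⋯xₙ₋₁` vanishes). -/
def IsLeftPerfectRing (R : Type*) [Ring R] : Prop :=
  IsSemiperfectRing R ∧
    ∀ x : ℕ → R, (∀ i, x i ∈ Ideal.jacobson (⊥ : Ideal R)) →
      ∃ n : ℕ, ((List.range n).map x).prod = 0

/-- `R` is right perfect: it is semiperfect and `J(R)` is right `T`-nilpotent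
(for every sequence `x₀, x₁, …` in `J(R)` some product `xₙ₋₁⋯x₁x₀` vanishes). -/
def IsRightPerfectRing (R : Type*) [Ring R] : Prop :=
  IsSemiperfectRing R ∧
    ∀ x : ℕ → R, (∀ i, x i ∈ Ideal.jacobson (⊥ : Ideal R)) →
      ∃ n : ℕ, (((List.range n).map x).reverse).prod = 0

/-!
Let `C` be the center and `J` the Jacobson radical of `R`. If `R` is centrally essential, a simple
`C`-submodule of `R` contains a nonzero central element, which then generates it, so `Soc(R_C) ⊆ C`;
and for an idempotent `e` every central multiple of `e r (1 - e)` vanishes, so `e` is central.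

Conversely, `R/J` is semisimple, hence von Neumann regular, and lifting idempotents (which are
central) shows that every element of `C/(J ∩ C)` is a unit times an idempotent. Since `C/(J ∩ C)`
embeds into the Noetherian ring `R/J`, each of its ideals is generated by an idempotent, so
`C/(J ∩ C)` is semisimple. By `T`-nilpotence every `r ≠ 0` has a nonzero central multiple `m`
killed by `J ∩ C`, so `C m` is a semisimple `C`-module; a nonzero element of a simple submodule of
`C m` is a central multiple of `r` lying in `Soc(R_C) ⊆ C`.
-/

open Ideal

section Jacobson

variable {R : Type*} [Ring R]

theorem exists_mul_one_add_eq_one_of_mem_jacobson {x : R} (hx : x ∈ jacobson (⊥ : Ideal R)) :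
    ∃ z, z * (1 + x) = 1 := by
  obtain ⟨z, hz⟩ := mem_jacobson_iff.1 hx 1
  rw [mem_bot, sub_eq_zero, mul_one] at hz
  exact ⟨z, by rw [mul_add, mul_one, add_comm, hz]⟩

theorem isUnit_one_add_of_mem_jacobson {x : R} (hx : x ∈ jacobson (⊥ : Ideal R)) :
    IsUnit (1 + x) := by
  obtain ⟨z, hz⟩ := exists_mul_one_add_eq_one_of_mem_jacobson hx
  -- `z = 1 - z * x` is again of the form `1 + j`, so it has a left inverse as well
  obtain ⟨w, hw⟩ := exists_mul_one_add_eq_one_of_mem_jacobson (neg_mem (mul_mem_left _ z hx))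
  have hwz : w * z = 1 := by
    rw [← hw]
    congr 1
    linear_combination (norm := noncomm_ring) hz
  obtain ⟨v, rfl⟩ : IsUnit z := isUnit_iff_exists_and_exists.2 ⟨⟨1 + x, hz⟩, ⟨w, hwz⟩⟩
  exact Units.mul_eq_one_iff_inv_eq.1 hz ▸ v⁻¹.isUnit

theorem isUnit_of_isUnit_map_of_ker_le_jacobson {S : Type*} [Ring S] (f : R →+* S)
    (hf : Function.Surjective f) (hker : RingHom.ker f ≤ jacobson (⊥ : Ideal R)) {x : R}
    (hx : IsUnit (f x)) : IsUnit x := by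
  have isUnit_of_map_eq_one : ∀ a, f a = 1 → IsUnit a := fun a ha => by
    simpa using isUnit_one_add_of_mem_jacobson (hker (show a - 1 ∈ RingHom.ker f by simp [ha]))
  obtain ⟨y, hy⟩ := hf ↑hx.unit⁻¹
  have hxy : IsUnit (x * y) := isUnit_of_map_eq_one _ (by simp [hy])
  have hyx : IsUnit (y * x) := isUnit_of_map_eq_one _ (by simp [hy])
  exact isUnit_iff_exists_and_exists.2
    ⟨⟨y * ↑hxy.unit⁻¹, by rw [← mul_assoc, hxy.mul_val_inv]⟩,
      ⟨↑hyx.unit⁻¹ * y, by rw [mul_assoc, hyx.val_inv_mul]⟩⟩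

end Jacobson

theorem isUnit_of_isUnit_coe_center {R : Type*} [Ring R] {u : Subring.center R}
    (h : IsUnit (u : R)) : IsUnit u := by
  obtain ⟨v, hv⟩ := h
  have hvc : ((v⁻¹ : Rˣ) : R) ∈ Subring.center R := Set.units_inv_mem_center (hv ▸ u.2)
  exact ⟨⟨u, ⟨_, hvc⟩, Subtype.ext (by simp [← hv]), Subtype.ext (by simp [← hv])⟩, rfl⟩

theorem IsSemisimpleRing.exists_mul_mul_eq_self {S : Type*} [Ring S] [IsSemisimpleRing S]
    (a : S) : ∃ x, a * x * a = a := by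
  obtain ⟨e, he, hspan⟩ := IsSemisimpleRing.ideal_eq_span_idempotent (span {a})
  obtain ⟨x, hx⟩ := mem_span_singleton'.1 (hspan ▸ mem_span_singleton_self e : e ∈ span {a})
  obtain ⟨y, hy⟩ := mem_span_singleton'.1 (hspan ▸ mem_span_singleton_self a : a ∈ span {e})
  exact ⟨x, by rw [mul_assoc, hx, ← hy, mul_assoc, he.eq]⟩

theorem isUnit_add_one_sub_mul {S : Type*} [Ring S] {s x : S} (hsx : Commute s x)
    (h : s * x * s = s) : IsUnit (s + 1 - s * x) := by
  have hs : s * (s * x) = s := by rw [hsx.eq, ← mul_assoc, h]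
  have hx : (s * x * x) * s = s * x := by rw [mul_assoc, ← hsx.eq, ← mul_assoc, h]
  refine isUnit_iff_exists_and_exists.2 ⟨⟨s * x * x + 1 - s * x, ?_⟩, ⟨s * x * x + 1 - s * x, ?_⟩⟩
  · linear_combination (norm := noncomm_ring) hs * x - hs + h * x - h * x * x
  · linear_combination (norm := noncomm_ring) hx - hx * x - h + h * x

theorem exists_isUnit_isIdempotentElem_map_mul_eq {R S : Type*} [Ring R] [Ring S]
    [IsSemisimpleRing S] (f : R →+* S) (hf : Function.Surjective f)
    (hker : RingHom.ker f ≤ jacobson (⊥ : Ideal R))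
    (hidem : ∀ s, IsIdempotentElem s → ∃ e ∈ Subring.center R, IsIdempotentElem e ∧ f e = s)
    (p : Subring.center R) :
    ∃ u e : Subring.center R, IsUnit u ∧ IsIdempotentElem e ∧ f ↑(u * e) = f p := by
  set s := f p
  obtain ⟨x, hx⟩ := IsSemisimpleRing.exists_mul_mul_eq_self s
  have hsx : Commute s x := by
    obtain ⟨y, rfl⟩ := hf x
    exact (show Commute (p : R) y from (Subring.mem_center_iff.1 p.2 y).symm).map f
  obtain ⟨ε, hεc, hε, hfε⟩ := hidem (s * x) (by rw [IsIdempotentElem, ← mul_assoc, hx])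
  set u : Subring.center R := p + 1 - ⟨ε, hεc⟩
  have hfu : f u = s + 1 - s * x := by simp [u, s, hfε]
  refine ⟨u, ⟨ε, hεc⟩, ?_, Subtype.ext hε, ?_⟩
  · exact isUnit_of_isUnit_coe_center
      (isUnit_of_isUnit_map_of_ker_le_jacobson f hf hker (hfu ▸ isUnit_add_one_sub_mul hsx hx))
  · have hs : s * (s * x) = s := by rw [hsx.eq, ← mul_assoc, hx]
    rw [Subring.coe_mul, map_mul, hfu, hfε]
    linear_combination (norm := noncomm_ring) hs - hx * x

section Idempotent

variable {Q : Type*} [CommRing Q]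

theorem exists_isIdempotentElem_eq_span_of_injective {S : Type*} [Ring S] [IsNoetherianRing S]
    (φ : Q →+* S) (hφ : Function.Injective φ)
    (h : ∀ a : Q, ∃ u e, IsUnit u ∧ IsIdempotentElem e ∧ u * e = a) (A : Ideal Q) :
    ∃ e, IsIdempotentElem e ∧ A = span {e} := by
  -- an idempotent `e₀ ∈ A` for which the left ideal `S φ(e₀)` is maximal
  obtain ⟨_, ⟨e₀, ⟨he₀, he₀A⟩, rfl⟩, hmax⟩ := set_has_maximal_iff_noetherian.2 ‹_›
    ((fun e => span {φ e}) '' {e | IsIdempotentElem e ∧ e ∈ A}) ⟨_, 0, ⟨.zero, A.zero_mem⟩, rfl⟩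
  have absorb : ∀ e, IsIdempotentElem e → e ∈ A → e * e₀ = e := by
    intro e he heA
    set g := e₀ + e - e₀ * e
    have he₀g : e₀ * g = e₀ := by linear_combination (1 - e) * he₀.eq
    have hspan : span {φ e₀} = span {φ g} := by
      refine eq_of_le_of_not_lt ?_ (hmax _ ⟨g, ⟨he₀.add_sub_mul he, ?_⟩, rfl⟩)
      · exact span_le.2 (Set.singleton_subset_iff.2
          (mem_span_singleton'.2 ⟨φ e₀, by rw [← map_mul, he₀g]⟩))
      · exact sub_mem (add_mem he₀A heA) (A.mul_mem_left e₀ heA)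
    obtain ⟨w, hw⟩ := mem_span_singleton'.1 (hspan ▸ mem_span_singleton_self (φ g))
    have hg : g = e₀ := hφ <| by
      rw [← he₀g, mul_comm, map_mul, ← hw, mul_assoc, ← map_mul, he₀.eq]
    calc e * e₀ = e * g := by rw [hg]
      _ = e := by linear_combination (1 - e₀) * he.eq
  refine ⟨e₀, he₀, le_antisymm (fun a ha => ?_) ((span_singleton_le_iff_mem _).2 he₀A)⟩
  obtain ⟨u, e, hu, he, rfl⟩ := h a
  rw [← absorb e he ((unit_mul_mem_iff_mem A hu).1 ha), ← mul_assoc]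
  exact mul_mem_left _ _ (mem_span_singleton_self e₀)

theorem isSemisimpleRing_of_forall_eq_span_idempotent
    (h : ∀ A : Ideal Q, ∃ e, IsIdempotentElem e ∧ A = span {e}) : IsSemisimpleRing Q := by
  refine (isSemisimpleModule_iff Q Q).2 ⟨fun A => ?_⟩
  obtain ⟨e, he, rfl⟩ := h A
  have hp : IsIdempotentElem (LinearMap.toSpanSingleton Q Q e) :=
    LinearMap.ext fun x => by simp [mul_assoc, he.eq]
  exact ⟨_, (LinearMap.span_singleton_eq_range Q Q e).symm ▸ LinearMap.IsIdempotentElem.isCompl hp⟩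

end Idempotent

theorem isSemisimpleRing_center_quotient_jacobson {R : Type*} [Ring R] (hR : IsSemiperfectRing R)
    (hcent : ∀ e : R, IsIdempotentElem e → e ∈ Subring.center R) :
    IsSemisimpleRing
      (Subring.center R ⧸ (jacobson (⊥ : Ideal R)).comap (Subring.center R).subtype) := by
  obtain ⟨⟨S, _, _, f, hf, hker⟩, hlift⟩ := hR
  have hidem (s : S) (hs : IsIdempotentElem s) :
      ∃ e ∈ Subring.center R, IsIdempotentElem e ∧ f e = s := by
    obtain ⟨x, rfl⟩ := hf s
    obtain ⟨e, he, hex⟩ :=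
      hlift x (by rw [← hker, RingHom.mem_ker, map_sub, map_mul, hs.eq, sub_self])
    rw [← hker, RingHom.mem_ker, map_sub, sub_eq_zero] at hex
    exact ⟨e, hcent e he, he, hex⟩
  set g := f.comp (Subring.center R).subtype
  rw [← hker, RingHom.comap_ker]
  refine isSemisimpleRing_of_forall_eq_span_idempotent
    (exists_isIdempotentElem_eq_span_of_injective g.kerLift g.kerLift_injective ?_)
  intro a
  obtain ⟨p, rfl⟩ := Ideal.Quotient.mk_surjective a
  obtain ⟨u, e, hu, he, hue⟩ := exists_isUnit_isIdempotentElem_map_mul_eq f hf hker.le hidem p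
  exact ⟨_, _, hu.map (Ideal.Quotient.mk _), he.map (Ideal.Quotient.mk _),
    g.kerLift_injective (by simpa [g] using hue)⟩

/-- Over a commutative ring left and right `T`-nilpotence coincide. -/
def Ideal.IsTNilpotent {A : Type*} [CommRing A] (I : Ideal A) : Prop :=
  ∀ x : ℕ → A, (∀ i, x i ∈ I) → ∃ n, ((List.range n).map x).prod = 0

theorem isTNilpotent_comap_center_jacobson {R : Type*} [Ring R]
    (hR : IsLeftPerfectRing R ∨ IsRightPerfectRing R) :
    ((jacobson (⊥ : Ideal R)).comap (Subring.center R).subtype).IsTNilpotent := by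
  intro x hx
  have hcoe (l : List (Subring.center R)) : ((l.prod : Subring.center R) : R) = (l.map (↑)).prod :=
    map_list_prod (Subring.center R).subtype l
  rcases hR with ⟨-, hT⟩ | ⟨-, hT⟩
  · obtain ⟨n, hn⟩ := hT (fun i => x i) hx
    exact ⟨n, Subtype.ext (by rw [hcoe, List.map_map]; exact hn)⟩
  · obtain ⟨n, hn⟩ := hT (fun i => x i) hx
    refine ⟨n, ?_⟩
    rw [← List.prod_reverse]
    exact Subtype.ext (by rw [hcoe, List.map_reverse, List.map_map]; exact hn)

section Module

variable {A M : Type*} [AddCommGroup M]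

theorem Ideal.IsTNilpotent.exists_smul_ne_zero_le_annihilator [CommRing A] [Module A M]
    {I : Ideal A} (hI : I.IsTNilpotent) {m : M} (hm : m ≠ 0) :
    ∃ a : A, a • m ≠ 0 ∧ I ≤ (A ∙ a • m).annihilator := by
  simp_rw [SetLike.le_def, Submodule.mem_annihilator_span_singleton]
  by_contra! h
  choose! c hcI hc using h
  -- otherwise the products `a (n + 1) = a n * c (a n)` of elements of `I` never kill `m`
  let a : ℕ → A := fun n => Nat.rec 1 (fun _ b => b * c b) n
  have ha (n : ℕ) : a n • m ≠ 0 := by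
    induction n with
    | zero => simpa [a]
    | succ n ih =>
      rw [show a (n + 1) = a n * c (a n) from rfl, mul_comm, mul_smul]
      exact hc _ ih
  have hprod (n : ℕ) : ((List.range n).map fun i => c (a i)).prod = a n := by
    induction n with
    | zero => rfl
    | succ n ih => rw [List.prod_range_succ, ih]
  obtain ⟨n, hn⟩ := hI (fun i => c (a i)) (fun i => hcI _ (ha i))
  exact ha n (by rw [← hprod, hn, zero_smul])

theorem isSemisimpleModule_of_le_annihilator [Ring A] [Module A M] {I : Ideal A} [I.IsTwoSided]
    [IsSemisimpleRing (A ⧸ I)] (hI : I ≤ Module.annihilator A M) : IsSemisimpleModule A M := by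
  have hM : Module.IsTorsionBySet A M I := (Module.isTorsionBySet_iff_subset_annihilator A M).2 hI
  let := hM.module
  exact hM.isSemisimpleModule_iff.1 inferInstance

theorem exists_smul_ne_zero_mem_sSup_simples [Ring A] [Module A M] {m : M} (hm : m ≠ 0)
    [IsSemisimpleModule A (A ∙ m)] :
    ∃ a : A, a • m ≠ 0 ∧ a • m ∈ sSup {S : Submodule A M | IsSimpleModule A S} := by
  have : Nontrivial (A ∙ m) := Submodule.nontrivial_iff_ne_bot.2 (by simpa using hm)
  obtain ⟨K, hK⟩ := IsSemisimpleModule.exists_simple_submodule A (A ∙ m)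
  have hKM : IsSimpleModule A (K.map (A ∙ m).subtype) :=
    .congr (Submodule.equivMapOfInjective _ (Submodule.injective_subtype _) K).symm
  obtain ⟨⟨y, hy⟩, hyK, hy0⟩ := Submodule.exists_mem_ne_zero_of_ne_bot hK.isAtom.1
  obtain ⟨a, rfl⟩ := Submodule.mem_span_singleton.1 hy
  exact ⟨a, by simpa using hy0, le_sSup (α := Submodule A M) hKM (Submodule.mem_map_of_mem hyK)⟩

end Module

namespace IsCentrallyEssential

variable {R : Type*} [Ring R]

/-- A central multiple `z` of `e * r * (1 - e)` satisfies `z = e * z = z * e = 0`. -/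
theorem mul_mul_one_sub_eq_zero (hR : IsCentrallyEssential R) {e : R} (he : IsIdempotentElem e)
    (r : R) : e * r * (1 - e) = 0 := by
  by_contra hne
  obtain ⟨c, hc, hcne, hcen⟩ := hR _ hne
  have hX : e * (e * r * (1 - e)) = e * r * (1 - e) := by rw [← mul_assoc, ← mul_assoc, he.eq]
  apply hcne
  calc c * (e * r * (1 - e)) = c * (e * (e * r * (1 - e))) := by rw [hX]
    _ = e * (c * (e * r * (1 - e))) := by simp only [← mul_assoc, Subring.mem_center_iff.1 hc e]
    _ = c * (e * r * (1 - e)) * e := Subring.mem_center_iff.1 hcen e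
    _ = 0 := by rw [mul_assoc, mul_assoc, mul_assoc, he.one_sub_mul_self, mul_zero, mul_zero,
        mul_zero]

theorem mem_center_of_isIdempotentElem (hR : IsCentrallyEssential R) {e : R}
    (he : IsIdempotentElem e) : e ∈ Subring.center R := by
  refine Subring.mem_center_iff.2 fun r => ?_
  have h₁ := hR.mul_mul_one_sub_eq_zero he r
  have h₂ := hR.mul_mul_one_sub_eq_zero he.one_sub r
  linear_combination (norm := noncomm_ring) h₂ - h₁

theorem centerSocle_le_s18 (hR : IsCentrallyEssential R) :
    centerSocle R ≤ (Subalgebra.center (Subring.center R) R).toSubmodule := by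
  refine sSup_le fun S (hS : IsSimpleModule _ S) => ?_
  obtain ⟨y, hyS, hy0⟩ := Submodule.exists_mem_ne_zero_of_ne_bot hS.isAtom.1
  obtain ⟨c, hc, hcy, hcyc⟩ := hR y hy0
  -- `S` is simple, so it is generated by its nonzero central element `c * y`
  have hspan : Subring.center R ∙ (c * y) = S :=
    (hS.isAtom.le_iff.1 ((Submodule.span_singleton_le_iff_mem _ _).2
      (S.smul_mem ⟨c, hc⟩ hyS))).resolve_left (by simpa [Subring.smul_def] using hcy)
  exact hspan ▸ (Submodule.span_singleton_le_iff_mem _ _).2 hcyc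

end IsCentrallyEssential

/-- A right or left perfect ring is centrally essential iff `Soc(R_C) ⊆ C` and
all idempotents of `R` are central. -/
theorem centrallyEssential_iff_of_perfect (R : Type*) [Ring R]
    (hperf : IsLeftPerfectRing R ∨ IsRightPerfectRing R) :
    IsCentrallyEssential R ↔
      ((∀ x ∈ centerSocle R, x ∈ Subring.center R) ∧
        ∀ e : R, e * e = e → e ∈ Subring.center R) := by
  refine ⟨fun hR => ⟨fun x hx => hR.centerSocle_le_s18 hx,
    fun e he => hR.mem_center_of_isIdempotentElem he⟩, fun ⟨hsoc, hcent⟩ r hr => ?_⟩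
  have := isSemisimpleRing_center_quotient_jacobson (hperf.elim (·.1) (·.1)) hcent
  obtain ⟨a, ha, hann⟩ :=
    (isTNilpotent_comap_center_jacobson hperf).exists_smul_ne_zero_le_annihilator hr
  have : IsSemisimpleModule (Subring.center R) (Subring.center R ∙ a • r) :=
    isSemisimpleModule_of_le_annihilator hann
  obtain ⟨b, hb, hbsoc⟩ := exists_smul_ne_zero_mem_sSup_simples (A := Subring.center R) ha
  rw [← mul_smul] at hb hbsoc
  exact ⟨_, (b * a).2, hb, hsoc _ hbsoc⟩
end

section
/- The formal power series ring in one variable over the real quaternions is a local ring without zero-divisors, all of whose idempotents are central and whose socle as a module over its center is contained in the center, but it is not centrally essential. -/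
/-!
Over a local ring, a power series is a unit iff its constant coefficient is, so `ℍ⟦X⟧` is a local
domain and its only idempotents are `0` and `1`. If `x` spanned a simple submodule over the center,
so would `X * x`, giving `x = d * X * x` with `d` central and making `X` a unit; hence the socle is
`0`. Coefficients of central series are central, so a central `c` with `c * C i` central yields
central `cₙ` with `cₙ * i` central; in the division ring `ℍ` this forces `cₙ = 0`, as `i` is not
central.
-/

open PowerSeries Quaternion

instance DivisionRing.isLocalRing (D : Type*) [DivisionRing D] : IsLocalRing D :=
  IsLocalRing.of_isUnit_or_isUnit_one_sub_self fun a => by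
    by_cases ha : a = 0
    · simp [ha]
    · exact .inl (Ne.isUnit ha)

instance PowerSeries.isLocalRing (R : Type*) [Ring R] [IsLocalRing R] : IsLocalRing R⟦X⟧ where
  isUnit_or_isUnit_of_add_one {a b} hab := by
    simp only [isUnit_iff_constantCoeff]
    exact IsLocalRing.isUnit_or_isUnit_of_add_one (by simpa using congrArg constantCoeff hab)

theorem PowerSeries.not_isUnit_X (R : Type*) [Ring R] [Nontrivial R] : ¬IsUnit (X : R⟦X⟧) := by
  simp [isUnit_iff_constantCoeff]

theorem PowerSeries.X_mem_center (R : Type*) [Ring R] : (X : R⟦X⟧) ∈ Subring.center R⟦X⟧ :=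
  Subring.mem_center_iff.mpr fun φ => (commute_X φ).eq

theorem centerSocle_eq_bot_of_mem_center {R : Type*} [Ring R] [NoZeroDivisors R] {z : R}
    (hz : z ∈ Subring.center R) (hz0 : z ≠ 0) (hzu : ¬IsUnit z) : centerSocle R = ⊥ := by
  suffices ∀ S : Submodule (Subring.center R) R, ¬IsSimpleModule (Subring.center R) S by
    simp [centerSocle, this]
  intro S hS
  have hatom := isSimpleModule_iff_isAtom.mp hS
  obtain ⟨x, hxS, hx0⟩ := S.ne_bot_iff.mp hatom.1
  have hzxS : z * x ∈ S := S.smul_mem ⟨z, hz⟩ hxS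
  have hspan : Submodule.span (Subring.center R) {z * x} = S :=
    (hatom.le_iff.mp ((Submodule.span_singleton_le_iff_mem _ _).mpr hzxS)).resolve_left
      (by simp [hz0, hx0])
  obtain ⟨d, hd⟩ := Submodule.mem_span_singleton.mp (hspan ▸ hxS)
  have hdz : (d : R) * z = 1 := by
    have : ((d : R) * z - 1) * x = 0 := by
      rw [sub_mul, one_mul, mul_assoc]
      exact sub_eq_zero.mpr hd
    exact sub_eq_zero.mp ((mul_eq_zero.mp this).resolve_right hx0)
  exact hzu ⟨⟨z, d, (Subring.mem_center_iff.mp d.2 z).trans hdz, hdz⟩, rfl⟩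

theorem IsCentrallyEssential.mem_center {D : Type*} [DivisionRing D] (h : IsCentrallyEssential D)
    (r : D) : r ∈ Subring.center D := by
  by_cases hr : r = 0
  · exact hr ▸ Subring.zero_mem _
  obtain ⟨c, hc, hcr0, hcr⟩ := h r hr
  have hc0 : c ≠ 0 := left_ne_zero_of_mul hcr0
  simpa [← mul_assoc, hc0] using Subring.mul_mem _ (Set.inv_mem_center hc) hcr

theorem PowerSeries.coeff_mem_center {R : Type*} [Ring R] {φ : R⟦X⟧}
    (hφ : φ ∈ Subring.center R⟦X⟧) (n : ℕ) : coeff n φ ∈ Subring.center R :=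
  Subring.mem_center_iff.mpr fun a => by
    simpa using congrArg (coeff n) (Subring.mem_center_iff.mp hφ (C a))

theorem PowerSeries.not_isCentrallyEssential {R : Type*} [Ring R] (h : ¬IsCentrallyEssential R) :
    ¬IsCentrallyEssential R⟦X⟧ := by
  intro hX
  obtain ⟨a, ha0, ha⟩ : ∃ a : R, a ≠ 0 ∧
      ∀ c ∈ Subring.center R, c * a ≠ 0 → c * a ∉ Subring.center R := by
    simpa [IsCentrallyEssential] using h
  obtain ⟨c, hc, hca0, hca⟩ := hX (C a) (C_injective.ne_iff' (map_zero C) |>.mpr ha0)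
  refine hca0 (PowerSeries.ext fun n => ?_)
  rw [coeff_mul_C, map_zero]
  by_contra hn
  exact ha _ (coeff_mem_center hc n) hn (coeff_mul_C n c a ▸ coeff_mem_center hca n)

theorem Quaternion.not_isCentrallyEssential : ¬IsCentrallyEssential ℍ[ℝ] := fun h => by
  have hji : (⟨0, 0, 1, 0⟩ : ℍ[ℝ]) * ⟨0, 1, 0, 0⟩ ≠ ⟨0, 1, 0, 0⟩ * ⟨0, 0, 1, 0⟩ := fun hji => by
    have := congrArg QuaternionAlgebra.imK hji
    norm_num at this
  exact hji (Subring.mem_center_iff.mp (h.mem_center _) _)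

/-- The power series ring `ℍ[[X]]` over the real quaternions is a local ring
without zero divisors, all of its idempotents are central, and its socle over
its center is contained in the center, but it is not centrally essential. -/
theorem quaternion_powerSeries_not_centrallyEssential :
    IsLocalRing (PowerSeries (Quaternion ℝ)) ∧
      (∀ a b : PowerSeries (Quaternion ℝ), a * b = 0 → a = 0 ∨ b = 0) ∧
      (∀ e : PowerSeries (Quaternion ℝ), e * e = e →
        e ∈ Subring.center (PowerSeries (Quaternion ℝ))) ∧
      (∀ x ∈ centerSocle (PowerSeries (Quaternion ℝ)),
        x ∈ Subring.center (PowerSeries (Quaternion ℝ))) ∧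
      ¬ IsCentrallyEssential (PowerSeries (Quaternion ℝ)) := by
  refine ⟨inferInstance, fun _ _ => mul_eq_zero.mp, fun e he => ?_, fun x hx => ?_,
    PowerSeries.not_isCentrallyEssential Quaternion.not_isCentrallyEssential⟩
  · rcases IsIdempotentElem.iff_eq_zero_or_one.mp he with rfl | rfl
    exacts [Subring.zero_mem _, Subring.one_mem _]
  · rw [centerSocle_eq_bot_of_mem_center (X_mem_center _) X_ne_zero (not_isUnit_X _),
      Submodule.mem_bot] at hx
    exact hx ▸ Subring.zero_mem _
end
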